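/- arXiv:1907.11473 — 10 statements merged into one kernel-verified Lean document; each statement's English description precedes it below -/
import Mathlib

section
/- Let n, m ∈ ℕ*, ℓ > 0, K, C ∈ ℝ^{m×n}, z ∈ ℝⁿ and j ∈ {1,…,m}. If |((K−C)z)_j| ≤ ℓ, then φ(Kz)_j · ( φ(Kz)_j + (Cz)_j ) ≤ 0. -/
/-! Saturation is the projection onto `[-ℓ, ℓ]`, so the deadzone `sat u - u` points from `u`
towards every point `w` of `[-ℓ, ℓ]`: `(u - sat u) (w - sat u) ≤ 0`. Writing `(Cz)_j = u - w` with
`u = (Kz)_j` and `w = ((K - C)z)_j` turns the claim into exactly this projection inequality. -/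

open Matrix

/-- Componentwise saturation function with level `ℓ`. -/
noncomputable def satv {m : ℕ} (ℓ : ℝ) (v : Fin m → ℝ) : Fin m → ℝ :=
  fun k => if |v k| ≤ ℓ then v k else ℓ * v k / |v k|

/-- Deadzone nonlinearity `φ(u) = sat(u) − u`. -/
noncomputable def deadzone {m : ℕ} (ℓ : ℝ) (u : Fin m → ℝ) : Fin m → ℝ :=
  fun k => satv ℓ u k - u k

theorem satv_apply_eq_max_min {m : ℕ} {ℓ : ℝ} (hℓ : 0 ≤ ℓ) (v : Fin m → ℝ) (k : Fin m) :
    satv ℓ v k = max (-ℓ) (min ℓ (v k)) := by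
  unfold satv
  split_ifs with hv
  · rw [min_eq_right (abs_le.mp hv).2, max_eq_right (abs_le.mp hv).1]
  · rcases lt_abs.mp (not_le.mp hv) with hpos | hneg
    · rw [abs_of_pos (hℓ.trans_lt hpos), mul_div_cancel_right₀ _ (hℓ.trans_lt hpos).ne',
        min_eq_left hpos.le, max_eq_right (by linarith)]
    · have hu : v k < 0 := by linarith
      rw [abs_of_neg hu, mul_div_assoc, div_neg, div_self hu.ne, min_eq_right (by linarith),
        max_eq_left (by linarith)]
      ring

theorem sub_max_min_mul_sub_max_min_nonpos {a b u w : ℝ} (hw : w ∈ Set.Icc a b) :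
    (u - max a (min b u)) * (w - max a (min b u)) ≤ 0 := by
  obtain ⟨haw, hwb⟩ := hw
  rcases le_total u a with hua | hau
  · rw [max_eq_left (min_le_of_right_le hua)]
    exact mul_nonpos_of_nonpos_of_nonneg (by linarith) (by linarith)
  rcases le_total u b with hub | hbu
  · simp [min_eq_right hub, max_eq_right hau]
  · rw [min_eq_left hbu, max_eq_right (haw.trans hwb)]
    exact mul_nonpos_of_nonneg_of_nonpos (by linarith) (by linarith)

theorem stmt0_general (n m : ℕ) (ℓ : ℝ)
    (K C : Matrix (Fin m) (Fin n) ℝ) (z : Fin n → ℝ) (j : Fin m)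
    (h : |((K - C).mulVec z) j| ≤ ℓ) :
    deadzone ℓ (K.mulVec z) j * (deadzone ℓ (K.mulVec z) j + (C.mulVec z) j) ≤ 0 := by
  have hℓ : 0 ≤ ℓ := (abs_nonneg _).trans h
  have hw : (K - C).mulVec z j ∈ Set.Icc (-ℓ) ℓ := abs_le.mp h
  have hφ : deadzone ℓ (K.mulVec z) j * (deadzone ℓ (K.mulVec z) j + (C.mulVec z) j)
      = (K.mulVec z j - satv ℓ (K.mulVec z) j) * ((K - C).mulVec z j - satv ℓ (K.mulVec z) j) := by
    rw [deadzone, sub_mulVec, Pi.sub_apply]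
    ring
  rw [hφ, satv_apply_eq_max_min hℓ]
  exact sub_max_min_mul_sub_max_min_nonpos hw

theorem stmt0 (n m : ℕ) (hn : 0 < n) (hm : 0 < m) (ℓ : ℝ) (hℓ : 0 < ℓ)
    (K C : Matrix (Fin m) (Fin n) ℝ) (z : Fin n → ℝ) (j : Fin m)
    (h : |((K - C).mulVec z) j| ≤ ℓ) :
    deadzone ℓ (K.mulVec z) j * (deadzone ℓ (K.mulVec z) j + (C.mulVec z) j) ≤ 0 :=
  stmt0_general n m ℓ K C z j h
end

section
/- Let n, m ∈ ℕ*, ℓ > 0, K, C ∈ ℝ^{m×n}, let D ∈ ℝ^{m×m} be a diagonal matrix with positive diagonal entries, and let z ∈ ℝⁿ satisfy |((K−C)z)_j| ≤ ℓ for every j ∈ {1,…,m}. Then φ(Kz)ᵀ D ( φ(Kz) + Cz ) ≤ 0. -/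
/-!
Since `D` is diagonal with nonnegative entries, the quadratic form splits into the terms
`D j j * φ_j * (φ_j + (Cz)_j)`, so it suffices that each product `φ_j * (φ_j + (Cz)_j)` is
nonpositive. With `u = (Kz)_j`, `c = (Cz)_j`, this is `0` when `|u| ≤ ℓ`; when `u > ℓ` we have
`φ_j = ℓ - u < 0` and `φ_j + c = ℓ - (u - c) ≥ 0`, and the case `u < -ℓ` is symmetric.
-/

open Matrix

theorem Matrix.IsDiag.dotProduct_mulVec_nonpos {ι R : Type*} [Fintype ι] [DecidableEq ι]
    [CommRing R] [PartialOrder R] [IsOrderedRing R] {D : Matrix ι ι R} (hD : D.IsDiag)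
    (hD_nonneg : ∀ i, 0 ≤ D i i) {x y : ι → R} (hxy : ∀ i, x i * y i ≤ 0) :
    x ⬝ᵥ D *ᵥ y ≤ 0 := by
  rw [← hD.diagonal_diag]
  refine Finset.sum_nonpos fun i _ => ?_
  calc x i * (diagonal D.diag *ᵥ y) i = D i i * (x i * y i) := by rw [mulVec_diagonal, diag]; ring
    _ ≤ 0 := mul_nonpos_of_nonneg_of_nonpos (hD_nonneg i) (hxy i)

theorem deadzone_of_abs_le {m : ℕ} {ℓ : ℝ} {u : Fin m → ℝ} {k : Fin m} (hu : |u k| ≤ ℓ) :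
    deadzone ℓ u k = 0 := by
  simp [deadzone, satv, hu]

theorem deadzone_of_lt {m : ℕ} {ℓ : ℝ} {u : Fin m → ℝ} {k : Fin m} (hℓ : 0 ≤ ℓ)
    (hu : ℓ < u k) : deadzone ℓ u k = ℓ - u k := by
  have hpos : 0 < u k := hℓ.trans_lt hu
  have hnot : ¬ |u k| ≤ ℓ := by rw [abs_of_pos hpos]; exact not_le.mpr hu
  simp only [deadzone, satv, if_neg hnot]
  rw [abs_of_pos hpos, mul_div_cancel_right₀ ℓ hpos.ne']

theorem deadzone_of_lt_neg {m : ℕ} {ℓ : ℝ} {u : Fin m → ℝ} {k : Fin m} (hℓ : 0 ≤ ℓ)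
    (hu : u k < -ℓ) : deadzone ℓ u k = -ℓ - u k := by
  have hneg : u k < 0 := hu.trans_le (neg_nonpos.mpr hℓ)
  have hnot : ¬ |u k| ≤ ℓ := by rw [abs_of_neg hneg]; linarith
  simp only [deadzone, satv, if_neg hnot]
  rw [abs_of_neg hneg, mul_div_assoc, div_neg, div_self hneg.ne, mul_neg, mul_one]

theorem deadzone_mul_deadzone_add_nonpos {m : ℕ} {ℓ : ℝ} {u c : Fin m → ℝ} {k : Fin m}
    (h : |u k - c k| ≤ ℓ) : deadzone ℓ u k * (deadzone ℓ u k + c k) ≤ 0 := by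
  have hℓ : 0 ≤ ℓ := (abs_nonneg _).trans h
  obtain ⟨hlo, hhi⟩ := abs_le.mp h
  by_cases hu : |u k| ≤ ℓ
  · simp [deadzone_of_abs_le hu]
  rcases lt_abs.mp (not_le.mp hu) with hpos | hneg
  · rw [deadzone_of_lt hℓ hpos]
    exact mul_nonpos_of_nonpos_of_nonneg (by linarith) (by linarith)
  · rw [deadzone_of_lt_neg hℓ (by linarith)]
    exact mul_nonpos_of_nonneg_of_nonpos (by linarith) (by linarith)

theorem stmt1_general (n m : ℕ) (ℓ : ℝ)
    (K C : Matrix (Fin m) (Fin n) ℝ) (D : Matrix (Fin m) (Fin m) ℝ)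
    (hDdiag : D.IsDiag) (hDpos : ∀ i, 0 < D i i)
    (z : Fin n → ℝ) (h : ∀ j, |((K - C).mulVec z) j| ≤ ℓ) :
    deadzone ℓ (K.mulVec z) ⬝ᵥ
      D.mulVec (fun j => deadzone ℓ (K.mulVec z) j + (C.mulVec z) j) ≤ 0 := by
  refine hDdiag.dotProduct_mulVec_nonpos (fun i => (hDpos i).le) fun j => ?_
  refine deadzone_mul_deadzone_add_nonpos (c := C *ᵥ z) ?_
  simpa only [sub_mulVec, Pi.sub_apply] using h j

theorem stmt1 (n m : ℕ) (hn : 0 < n) (hm : 0 < m) (ℓ : ℝ) (hℓ : 0 < ℓ)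
    (K C : Matrix (Fin m) (Fin n) ℝ) (D : Matrix (Fin m) (Fin m) ℝ)
    (hDdiag : D.IsDiag) (hDpos : ∀ i, 0 < D i i)
    (z : Fin n → ℝ) (h : ∀ j, |((K - C).mulVec z) j| ≤ ℓ) :
    deadzone ℓ (K.mulVec z) ⬝ᵥ
      D.mulVec (fun j => deadzone ℓ (K.mulVec z) j + (C.mulVec z) j) ≤ 0 :=
  stmt1_general n m ℓ K C D hDdiag hDpos z h
end

section
/- Let P = [[P₁₁, P₁₂],[P₂₁, P₂₂]] ∈ ℝ^{(n₁+n₂)×(n₁+n₂)} be a symmetric matrix (so P₂₁ = P₁₂ᵀ) whose diagonal blocks P₁₁ ∈ ℝ^{n₁×n₁} and P₂₂ ∈ ℝ^{n₂×n₂} are positive definite. For a ≥ 0 define P_a := [[a·P₁₁, P₁₂],[P₂₁, P₂₂]]. Then there exists a* ≥ 0 such that: (i) P_{a*} is positive semidefinite but not positive definite; (ii) P_a is positive definite for every a > a*; and (iii) for every a ∈ [0, a*) the matrix P_a is not positive semidefinite. -/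
/-!
By the Schur complement with respect to the positive definite block `P₂₂`, the matrix `P_a` is
positive (semi)definite iff `a P₁₁ - S` is, where `S = P₁₂ P₂₂⁻¹ P₁₂ᵀ ⪰ 0`. The latter holds iff
`a ≥ a*` (resp. `a > a*`), where `a*` is the maximum of the generalized Rayleigh quotient
`xᵀSx / xᵀP₁₁x` over `x ≠ 0`, attained on the compact unit sphere; `a* ≥ 0` because `S ⪰ 0`.
-/

open Matrix

namespace Matrix

namespace PosDef

variable {m n R : Type*} [Fintype m] [Fintype n] [DecidableEq n]
  [CommRing R] [PartialOrder R] [StarRing R] [StarOrderedRing R]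

theorem posDef_fromBlocks₂₂_iff (A : Matrix m m R) (B : Matrix m n R) {D : Matrix n n R}
    (hD : D.PosDef) [Invertible D] :
    (fromBlocks A B Bᴴ D).PosDef ↔ (A - B * D⁻¹ * Bᴴ).PosDef := by
  rw [posDef_iff_dotProduct_mulVec, posDef_iff_dotProduct_mulVec,
    IsHermitian.fromBlocks₂₂ _ _ hD.1]
  refine and_congr_right fun _ => ⟨fun h x hx => ?_, fun h v hv => ?_⟩
  · have hv : x ⊕ᵥ -((D⁻¹ * Bᴴ) *ᵥ x) ≠ 0 := fun h0 =>
      hx (by simpa using congrArg (· ∘ Sum.inl) h0)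
    have := h hv
    rwa [dotProduct_mulVec, schur_complement_eq₂₂ _ _ _ _ hD.1, add_neg_cancel, dotProduct_zero,
      zero_add, ← dotProduct_mulVec] at this
  · rw [dotProduct_mulVec, ← Sum.elim_comp_inl_inr v, schur_complement_eq₂₂ _ _ _ _ hD.1,
      ← dotProduct_mulVec, ← dotProduct_mulVec]
    rcases eq_or_ne (v ∘ Sum.inl) 0 with h0 | h0
    · have hy : v ∘ Sum.inr ≠ 0 := by
        rintro h1
        exact hv (by rw [← Sum.elim_comp_inl_inr v, h0, h1]; ext (i | i) <;> rfl)
      simpa [h0] using hD.dotProduct_mulVec_pos hy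
    · exact add_pos_of_nonneg_of_pos (hD.posSemidef.dotProduct_mulVec_nonneg _) (h h0)

end PosDef

variable {ι : Type*} [Fintype ι]

lemma smul_dotProduct_mulVec_smul (M : Matrix ι ι ℝ) (t : ℝ) (x : ι → ℝ) :
    (t • x) ⬝ᵥ M *ᵥ (t • x) = t ^ 2 * (x ⬝ᵥ M *ᵥ x) := by
  rw [mulVec_smul, dotProduct_smul, smul_dotProduct, smul_eq_mul, smul_eq_mul]
  ring

lemma PosDef.exists_dotProduct_mulVec_le_mul [Nonempty ι] {A : Matrix ι ι ℝ}
    (hA : A.PosDef) (S : Matrix ι ι ℝ) :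
    ∃ c : ℝ, ∃ x₀ ≠ 0, x₀ ⬝ᵥ S *ᵥ x₀ = c * (x₀ ⬝ᵥ A *ᵥ x₀) ∧
      ∀ x, x ⬝ᵥ S *ᵥ x ≤ c * (x ⬝ᵥ A *ᵥ x) := by
  have hApos : ∀ x : ι → ℝ, x ≠ 0 → 0 < x ⬝ᵥ A *ᵥ x := fun x hx => by
    simpa using hA.dotProduct_mulVec_pos hx
  let ratio : (ι → ℝ) → ℝ := fun x => (x ⬝ᵥ S *ᵥ x) / (x ⬝ᵥ A *ᵥ x)
  have hsphere : ∀ x ∈ Metric.sphere (0 : ι → ℝ) 1, x ≠ 0 := fun x hx =>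
    ne_zero_of_mem_unit_sphere ⟨x, hx⟩
  have hcont : ContinuousOn ratio (Metric.sphere 0 1) :=
    ContinuousOn.div (by fun_prop) (by fun_prop) fun x hx => (hApos x (hsphere x hx)).ne'
  obtain ⟨x₀, hx₀, hmax⟩ := (isCompact_sphere (0 : ι → ℝ) 1).exists_isMaxOn
    (NormedSpace.sphere_nonempty.mpr zero_le_one) hcont
  refine ⟨ratio x₀, x₀, hsphere x₀ hx₀,
    (div_mul_cancel₀ _ (hApos x₀ (hsphere x₀ hx₀)).ne').symm, fun x => ?_⟩
  rcases eq_or_ne x 0 with rfl | hx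
  · simp
  -- the ratio is invariant under scaling, so its maximum on the sphere is a global one
  have hscale : ratio (‖x‖⁻¹ • x) = ratio x := by
    simp only [ratio, smul_dotProduct_mulVec_smul]
    exact mul_div_mul_left _ _ (by positivity)
  have hle : ratio x ≤ ratio x₀ := hscale ▸ hmax (by simp [norm_smul, hx])
  exact (div_le_iff₀ (hApos x hx)).mp hle

lemma PosDef.exists_posDef_smul_sub_iff [Nonempty ι] {A S : Matrix ι ι ℝ}
    (hA : A.PosDef) (hS : S.IsHermitian) :
    ∃ c : ℝ, (∀ a : ℝ, (a • A - S).PosSemidef ↔ c ≤ a) ∧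
      (∀ a : ℝ, (a • A - S).PosDef ↔ c < a) := by
  obtain ⟨c, x₀, hx₀, hc₀, hc⟩ := hA.exists_dotProduct_mulVec_le_mul S
  have hApos : ∀ x : ι → ℝ, x ≠ 0 → 0 < x ⬝ᵥ A *ᵥ x := fun x hx => by
    simpa using hA.dotProduct_mulVec_pos hx
  have hform (a : ℝ) (x : ι → ℝ) :
      star x ⬝ᵥ (a • A - S) *ᵥ x = a * (x ⬝ᵥ A *ᵥ x) - x ⬝ᵥ S *ᵥ x := by
    rw [star_trivial, sub_mulVec, dotProduct_sub, smul_mulVec, dotProduct_smul, smul_eq_mul]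
  have hherm (a : ℝ) : (a • A - S).IsHermitian := (hA.1.smul (IsSelfAdjoint.all a)).sub hS
  refine ⟨c, fun a => ⟨fun h => ?_, fun h => ?_⟩, fun a => ⟨fun h => ?_, fun h => ?_⟩⟩
  · have := h.dotProduct_mulVec_nonneg x₀
    rw [hform, hc₀] at this
    nlinarith [hApos x₀ hx₀]
  · refine .of_dotProduct_mulVec_nonneg (hherm a) fun x => ?_
    have hAx : 0 ≤ x ⬝ᵥ A *ᵥ x := by simpa using hA.posSemidef.dotProduct_mulVec_nonneg x
    rw [hform]
    nlinarith [hc x]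
  · have := h.dotProduct_mulVec_pos hx₀
    rw [hform, hc₀] at this
    nlinarith [hApos x₀ hx₀]
  · refine .of_dotProduct_mulVec_pos (hherm a) fun x hx => ?_
    rw [hform]
    nlinarith [hc x, hApos x hx]

end Matrix

theorem stmt2_general (n₁ n₂ : ℕ) (hn₁ : 0 < n₁)
    (P11 : Matrix (Fin n₁) (Fin n₁) ℝ) (P12 : Matrix (Fin n₁) (Fin n₂) ℝ)
    (P21 : Matrix (Fin n₂) (Fin n₁) ℝ) (P22 : Matrix (Fin n₂) (Fin n₂) ℝ)
    (hsymm : (Matrix.fromBlocks P11 P12 P21 P22).IsSymm)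
    (h11 : P11.PosDef) (h22 : P22.PosDef) :
    ∃ astar : ℝ, 0 ≤ astar ∧
      (Matrix.fromBlocks (astar • P11) P12 P21 P22).PosSemidef ∧
      ¬ (Matrix.fromBlocks (astar • P11) P12 P21 P22).PosDef ∧
      (∀ a : ℝ, astar < a → (Matrix.fromBlocks (a • P11) P12 P21 P22).PosDef) ∧
      (∀ a : ℝ, 0 ≤ a → a < astar →
        ¬ (Matrix.fromBlocks (a • P11) P12 P21 P22).PosSemidef) := by
  have : Nonempty (Fin n₁) := ⟨⟨0, hn₁⟩⟩
  let : Invertible P22 := h22.isUnit.invertible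
  obtain rfl : P21 = P12ᴴ := (isSymm_fromBlocks_iff.mp hsymm).2.1.symm
  have hS : (P12 * P22⁻¹ * P12ᴴ).PosSemidef := h22.inv.posSemidef.mul_mul_conjTranspose_same P12
  obtain ⟨c, hpsd, hpd⟩ := h11.exists_posDef_smul_sub_iff hS.1
  have hblock_psd (a : ℝ) : (fromBlocks (a • P11) P12 P12ᴴ P22).PosSemidef ↔ c ≤ a :=
    (PosDef.fromBlocks₂₂ _ _ h22).trans (hpsd a)
  have hblock_pd (a : ℝ) : (fromBlocks (a • P11) P12 P12ᴴ P22).PosDef ↔ c < a :=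
    (PosDef.posDef_fromBlocks₂₂_iff _ _ h22).trans (hpd a)
  have hc : 0 ≤ c := by
    by_contra! hneg
    have := ((hpd 0).2 hneg).trace_pos
    simp only [zero_smul, zero_sub, trace_neg, neg_pos] at this
    exact this.not_ge hS.trace_nonneg
  exact ⟨c, hc, (hblock_psd c).2 le_rfl, fun h => lt_irrefl c ((hblock_pd c).1 h),
    fun a ha => (hblock_pd a).2 ha, fun a _ ha h => ha.not_ge ((hblock_psd a).1 h)⟩

theorem stmt2 (n₁ n₂ : ℕ) (hn₁ : 0 < n₁) (hn₂ : 0 < n₂)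
    (P11 : Matrix (Fin n₁) (Fin n₁) ℝ) (P12 : Matrix (Fin n₁) (Fin n₂) ℝ)
    (P21 : Matrix (Fin n₂) (Fin n₁) ℝ) (P22 : Matrix (Fin n₂) (Fin n₂) ℝ)
    (hsymm : (Matrix.fromBlocks P11 P12 P21 P22).IsSymm)
    (h11 : P11.PosDef) (h22 : P22.PosDef) :
    ∃ astar : ℝ, 0 ≤ astar ∧
      (Matrix.fromBlocks (astar • P11) P12 P21 P22).PosSemidef ∧
      ¬ (Matrix.fromBlocks (astar • P11) P12 P21 P22).PosDef ∧
      (∀ a : ℝ, astar < a → (Matrix.fromBlocks (a • P11) P12 P21 P22).PosDef) ∧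
      (∀ a : ℝ, 0 ≤ a → a < astar →
        ¬ (Matrix.fromBlocks (a • P11) P12 P21 P22).PosSemidef) :=
  stmt2_general n₁ n₂ hn₁ P11 P12 P21 P22 hsymm h11 h22
end

section
/- Let n, m ∈ ℕ*, A ∈ ℝ^{n×n}, B ∈ ℝ^{n×m}, K ∈ ℝ^{m×n} and ℓ > 0. Then the following two assertions are equivalent: (1) there exist a symmetric positive definite matrix P ∈ ℝ^{n×n}, a diagonal matrix D ∈ ℝ^{m×m} with positive diagonal entries, and C ∈ ℝ^{m×n} such that M1 < 0 and M2 ≥ 0; (2) there exist a symmetric positive definite matrix S ∈ ℝ^{n×n}, a diagonal matrix E ∈ ℝ^{m×m} with positive diagonal entries, and Y ∈ ℝ^{m×n} such that the matrix [[S(A+BK)ᵀ + (A+BK)S, BE − Yᵀ],[(BE − Yᵀ)ᵀ, −2E]] is negative definite and the matrix [[S, SKᵀ − Yᵀ],[(SKᵀ − Yᵀ)ᵀ, ℓ²·I_m]] is positive semidefinite. -/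
open Matrix

/-- The block matrix `M1` from the paper. -/
def M1mat {n m : ℕ} (A : Matrix (Fin n) (Fin n) ℝ) (B : Matrix (Fin n) (Fin m) ℝ)
    (K C : Matrix (Fin m) (Fin n) ℝ) (P : Matrix (Fin n) (Fin n) ℝ)
    (D : Matrix (Fin m) (Fin m) ℝ) : Matrix (Fin n ⊕ Fin m) (Fin n ⊕ Fin m) ℝ :=
  Matrix.fromBlocks ((A + B * K)ᵀ * P + P * (A + B * K)) (P * B - (D * C)ᵀ)
    (Bᵀ * P - D * C) ((-2 : ℝ) • D)

/-- The block matrix `M2` from the paper. -/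
def M2mat {n m : ℕ} (K C : Matrix (Fin m) (Fin n) ℝ) (P : Matrix (Fin n) (Fin n) ℝ)
    (ℓ : ℝ) : Matrix (Fin n ⊕ Fin m) (Fin n ⊕ Fin m) ℝ :=
  Matrix.fromBlocks P (K - C)ᵀ (K - C) (ℓ ^ 2 • (1 : Matrix (Fin m) (Fin m) ℝ))

/-!
Congruence by the block-diagonal matrix `diag(P⁻¹, D⁻¹)` (resp. `diag(P⁻¹, I)`) turns `M1`
(resp. `M2`) into the matrices of assertion (2) for `S = P⁻¹`, `E = D⁻¹`, `Y = C P⁻¹`, and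
congruence by an invertible matrix preserves (semi)definiteness. Since this change of variables
is inverted by `P = S⁻¹`, `D = E⁻¹`, `C = Y S⁻¹`, the two assertions are equivalent.
-/

theorem Matrix.fromBlocks_diag_mul_fromBlocks_mul_fromBlocks_diag {l o R : Type*} [Fintype l]
    [Fintype o] [Ring R] (S S' : Matrix l l R) (E E' : Matrix o o R)
    (X₁₁ : Matrix l l R) (X₁₂ : Matrix l o R) (X₂₁ : Matrix o l R) (X₂₂ : Matrix o o R) :
    fromBlocks S 0 0 E * fromBlocks X₁₁ X₁₂ X₂₁ X₂₂ * fromBlocks S' 0 0 E' =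
      fromBlocks (S * X₁₁ * S') (S * X₁₂ * E') (E * X₂₁ * S') (E * X₂₂ * E') := by
  simp [fromBlocks_multiply]

theorem Matrix.IsDiag.inv_eq_diagonal {ι K : Type*} [Fintype ι] [DecidableEq ι] [Field K]
    {D : Matrix ι ι K} (hD : D.IsDiag) (hD₀ : ∀ i, D i i ≠ 0) :
    D⁻¹ = diagonal fun i => (D i i)⁻¹ := by
  refine inv_eq_right_inv ?_
  rw [← hD.diagonal_diag, diagonal_mul_diagonal]
  simp [hD₀]

theorem Matrix.IsDiag.posDef {ι : Type*} [Fintype ι] [DecidableEq ι] {D : Matrix ι ι ℝ}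
    (hD : D.IsDiag) (hpos : ∀ i, 0 < D i i) : D.PosDef := by
  rw [← hD.diagonal_diag]
  exact .diagonal hpos

theorem Matrix.PosDef.transpose_eq {ι : Type*} [Fintype ι] {P : Matrix ι ι ℝ}
    (hP : P.PosDef) : Pᵀ = P := by
  simpa [conjTranspose_eq_transpose_of_trivial] using hP.1.eq

section

variable {n m : ℕ} (A : Matrix (Fin n) (Fin n) ℝ) (B : Matrix (Fin n) (Fin m) ℝ)
  (K C : Matrix (Fin m) (Fin n) ℝ) {P : Matrix (Fin n) (Fin n) ℝ} {D : Matrix (Fin m) (Fin m) ℝ}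
  (ℓ : ℝ)

/-- `M1mat` after the change of variables `S = P⁻¹`, `E = D⁻¹`, `Y = C P⁻¹`. -/
def M1matDual (Y : Matrix (Fin m) (Fin n) ℝ) (S : Matrix (Fin n) (Fin n) ℝ)
    (E : Matrix (Fin m) (Fin m) ℝ) : Matrix (Fin n ⊕ Fin m) (Fin n ⊕ Fin m) ℝ :=
  fromBlocks (S * (A + B * K)ᵀ + (A + B * K) * S) (B * E - Yᵀ) (B * E - Yᵀ)ᵀ ((-2 : ℝ) • E)

def M2matDual (Y : Matrix (Fin m) (Fin n) ℝ) (S : Matrix (Fin n) (Fin n) ℝ) :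
    Matrix (Fin n ⊕ Fin m) (Fin n ⊕ Fin m) ℝ :=
  fromBlocks S (S * Kᵀ - Yᵀ) (S * Kᵀ - Yᵀ)ᵀ (ℓ ^ 2 • (1 : Matrix (Fin m) (Fin m) ℝ))

theorem fromBlocks_inv_mul_M1mat_mul_fromBlocks_inv (hP : IsUnit P) (hPT : Pᵀ = P)
    (hD : IsUnit D) (hDT : Dᵀ = D) :
    fromBlocks P⁻¹ 0 0 D⁻¹ * M1mat A B K C P D * fromBlocks P⁻¹ 0 0 D⁻¹ =
      M1matDual A B K (C * P⁻¹) P⁻¹ D⁻¹ := by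
  have hPdet := (isUnit_iff_isUnit_det P).1 hP
  have hDdet := (isUnit_iff_isUnit_det D).1 hD
  rw [M1mat, M1matDual, fromBlocks_diag_mul_fromBlocks_mul_fromBlocks_diag]
  congr 1
  · simp only [Matrix.mul_add, Matrix.add_mul, Matrix.mul_assoc, mul_nonsing_inv _ hPdet,
      Matrix.mul_one]
    simp only [← Matrix.mul_assoc, nonsing_inv_mul _ hPdet, Matrix.one_mul]
  · simp only [Matrix.mul_sub, Matrix.sub_mul, transpose_mul, transpose_nonsing_inv, hPT, hDT,
      Matrix.mul_assoc, mul_nonsing_inv _ hDdet, Matrix.mul_one]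
    simp only [← Matrix.mul_assoc, nonsing_inv_mul _ hPdet, Matrix.one_mul]
  · simp only [Matrix.mul_sub, Matrix.sub_mul, transpose_mul, transpose_sub, transpose_transpose,
      transpose_nonsing_inv, hPT, hDT, Matrix.mul_assoc, mul_nonsing_inv _ hPdet, Matrix.mul_one]
    simp only [← Matrix.mul_assoc, nonsing_inv_mul _ hDdet, Matrix.one_mul]
  · rw [Matrix.mul_smul, Matrix.smul_mul, nonsing_inv_mul _ hDdet, Matrix.one_mul]

theorem fromBlocks_inv_mul_M2mat_mul_fromBlocks_inv (hP : IsUnit P) (hPT : Pᵀ = P) :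
    fromBlocks P⁻¹ 0 0 1 * M2mat K C P ℓ * fromBlocks P⁻¹ 0 0 1 =
      M2matDual K ℓ (C * P⁻¹) P⁻¹ := by
  have hPdet := (isUnit_iff_isUnit_det P).1 hP
  rw [M2mat, M2matDual, fromBlocks_diag_mul_fromBlocks_mul_fromBlocks_diag]
  congr 1
  · rw [nonsing_inv_mul _ hPdet, Matrix.one_mul]
  · simp [Matrix.mul_sub, transpose_mul, transpose_nonsing_inv, hPT]
  · simp [Matrix.sub_mul, transpose_mul, transpose_nonsing_inv, hPT]
  · simp

theorem neg_M1mat_posDef_iff (hP : P.PosDef) (hD : D.PosDef) :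
    (-M1mat A B K C P D).PosDef ↔ (-M1matDual A B K (C * P⁻¹) P⁻¹ D⁻¹).PosDef := by
  have hT : IsUnit (fromBlocks P⁻¹ 0 0 D⁻¹) :=
    isUnit_fromBlocks_zero₂₁.2 ⟨hP.inv.isUnit, hD.inv.isUnit⟩
  have hT_star : star (fromBlocks P⁻¹ 0 0 D⁻¹) = fromBlocks P⁻¹ 0 0 D⁻¹ :=
    (hP.inv.1.fromBlocks (by simp) hD.inv.1).eq
  rw [← hT.posDef_star_left_conjugate_iff, hT_star, Matrix.mul_neg, Matrix.neg_mul,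
    fromBlocks_inv_mul_M1mat_mul_fromBlocks_inv A B K C hP.isUnit hP.transpose_eq hD.isUnit
      hD.transpose_eq]

theorem M2mat_posSemidef_iff (hP : P.PosDef) :
    (M2mat K C P ℓ).PosSemidef ↔ (M2matDual K ℓ (C * P⁻¹) P⁻¹).PosSemidef := by
  have hT : IsUnit (fromBlocks P⁻¹ 0 0 (1 : Matrix (Fin m) (Fin m) ℝ)) :=
    isUnit_fromBlocks_zero₂₁.2 ⟨hP.inv.isUnit, isUnit_one⟩
  have hT_star : star (fromBlocks P⁻¹ 0 0 (1 : Matrix (Fin m) (Fin m) ℝ)) =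
      fromBlocks P⁻¹ 0 0 1 :=
    (hP.inv.1.fromBlocks (by simp) isHermitian_one).eq
  rw [← hT.posSemidef_star_left_conjugate_iff, hT_star,
    fromBlocks_inv_mul_M2mat_mul_fromBlocks_inv K C ℓ hP.isUnit hP.transpose_eq]

end

theorem stmt3_general (n m : ℕ)
    (A : Matrix (Fin n) (Fin n) ℝ) (B : Matrix (Fin n) (Fin m) ℝ)
    (K : Matrix (Fin m) (Fin n) ℝ) (ℓ : ℝ) :
    (∃ (P : Matrix (Fin n) (Fin n) ℝ) (D : Matrix (Fin m) (Fin m) ℝ)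
        (C : Matrix (Fin m) (Fin n) ℝ),
      P.PosDef ∧ D.IsDiag ∧ (∀ i, 0 < D i i) ∧
      (-(M1mat A B K C P D)).PosDef ∧ (M2mat K C P ℓ).PosSemidef) ↔
    (∃ (S : Matrix (Fin n) (Fin n) ℝ) (E : Matrix (Fin m) (Fin m) ℝ)
        (Y : Matrix (Fin m) (Fin n) ℝ),
      S.PosDef ∧ E.IsDiag ∧ (∀ i, 0 < E i i) ∧
      (-(Matrix.fromBlocks (S * (A + B * K)ᵀ + (A + B * K) * S) (B * E - Yᵀ)
          ((B * E - Yᵀ)ᵀ) ((-2 : ℝ) • E))).PosDef ∧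
      (Matrix.fromBlocks S (S * Kᵀ - Yᵀ) ((S * Kᵀ - Yᵀ)ᵀ)
          (ℓ ^ 2 • (1 : Matrix (Fin m) (Fin m) ℝ))).PosSemidef) := by
  have inv_diag {D : Matrix (Fin m) (Fin m) ℝ} (hD : D.IsDiag) (hpos : ∀ i, 0 < D i i) :
      D⁻¹.IsDiag ∧ ∀ i, 0 < D⁻¹ i i := by
    rw [hD.inv_eq_diagonal fun i => (hpos i).ne']
    exact ⟨isDiag_diagonal _, fun i => by simpa using hpos i⟩
  constructor
  · rintro ⟨P, D, C, hP, hD, hDpos, hM1, hM2⟩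
    exact ⟨P⁻¹, D⁻¹, C * P⁻¹, hP.inv, (inv_diag hD hDpos).1, (inv_diag hD hDpos).2,
      (neg_M1mat_posDef_iff A B K C hP (hD.posDef hDpos)).1 hM1,
      (M2mat_posSemidef_iff K C ℓ hP).1 hM2⟩
  · rintro ⟨S, E, Y, hS, hE, hEpos, hN1, hN2⟩
    have hSS : S⁻¹⁻¹ = S := nonsing_inv_nonsing_inv S hS.det_pos.ne'.isUnit
    have hYS : Y * S⁻¹ * S⁻¹⁻¹ = Y := by
      rw [hSS, nonsing_inv_mul_cancel_right _ _ hS.det_pos.ne'.isUnit]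
    have hEE : E⁻¹⁻¹ = E := nonsing_inv_nonsing_inv E (hE.posDef hEpos).det_pos.ne'.isUnit
    refine ⟨S⁻¹, E⁻¹, Y * S⁻¹, hS.inv, (inv_diag hE hEpos).1, (inv_diag hE hEpos).2, ?_, ?_⟩
    · rw [neg_M1mat_posDef_iff A B K _ hS.inv (hE.posDef hEpos).inv, hYS, hSS, hEE]
      exact hN1
    · rw [M2mat_posSemidef_iff K _ ℓ hS.inv, hYS, hSS]
      exact hN2

theorem stmt3 (n m : ℕ) (hn : 0 < n) (hm : 0 < m)
    (A : Matrix (Fin n) (Fin n) ℝ) (B : Matrix (Fin n) (Fin m) ℝ)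
    (K : Matrix (Fin m) (Fin n) ℝ) (ℓ : ℝ) (hℓ : 0 < ℓ) :
    (∃ (P : Matrix (Fin n) (Fin n) ℝ) (D : Matrix (Fin m) (Fin m) ℝ)
        (C : Matrix (Fin m) (Fin n) ℝ),
      P.PosDef ∧ D.IsDiag ∧ (∀ i, 0 < D i i) ∧
      (-(M1mat A B K C P D)).PosDef ∧ (M2mat K C P ℓ).PosSemidef) ↔
    (∃ (S : Matrix (Fin n) (Fin n) ℝ) (E : Matrix (Fin m) (Fin m) ℝ)
        (Y : Matrix (Fin m) (Fin n) ℝ),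
      S.PosDef ∧ E.IsDiag ∧ (∀ i, 0 < E i i) ∧
      (-(Matrix.fromBlocks (S * (A + B * K)ᵀ + (A + B * K) * S) (B * E - Yᵀ)
          ((B * E - Yᵀ)ᵀ) ((-2 : ℝ) • E))).PosDef ∧
      (Matrix.fromBlocks S (S * Kᵀ - Yᵀ) ((S * Kᵀ - Yᵀ)ᵀ)
          (ℓ ^ 2 • (1 : Matrix (Fin m) (Fin m) ℝ))).PosSemidef) :=
  stmt3_general n m A B K ℓ
end

section
/- Let n, m ∈ ℕ*, ℓ > 0, K, C ∈ ℝ^{m×n}, and let P ∈ ℝ^{n×n} be symmetric positive definite. Then the block matrix M2 := [[P, (K−C)ᵀ],[K−C, ℓ²·I_m]] is positive semidefinite if and only if every z ∈ ℝⁿ with zᵀPz ≤ 1 satisfies |(K−C)z| ≤ ℓ, where |·| denotes the Euclidean norm on ℝ^m. -/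
open Matrix

/-!
Taking the Schur complement of the block `ℓ² I`, the matrix `M2` is positive semidefinite iff
`P - ℓ⁻² (K - C)ᵀ (K - C)` is, i.e. iff `|(K - C) z|² ≤ ℓ² zᵀ P z` for all `z`. Both sides of this
inequality are homogeneous of degree two in `z`, so it suffices to check it on the ellipsoid
`zᵀ P z ≤ 1`.
-/

namespace Matrix

variable {n m : Type*} [Fintype n] [Fintype m]

theorem posSemidef_fromBlocks_transpose_smul_one_iff [DecidableEq m] {P : Matrix n n ℝ}
    (hP : P.IsHermitian) (A : Matrix m n ℝ) {c : ℝ} (hc : 0 < c) :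
    (fromBlocks P Aᵀ A (c • 1)).PosSemidef ↔ ∀ x, A *ᵥ x ⬝ᵥ A *ᵥ x ≤ c * (x ⬝ᵥ P *ᵥ x) := by
  have hD : (c • 1 : Matrix m m ℝ).PosDef := PosDef.one.smul hc
  have := hD.isUnit.invertible
  have hinv : (c • 1 : Matrix m m ℝ)⁻¹ = c⁻¹ • 1 :=
    inv_eq_left_inv <| by rw [smul_mul_smul, Matrix.mul_one, inv_mul_cancel₀ hc.ne', one_smul]
  have hSchur := PosDef.fromBlocks₂₂ P Aᵀ hD
  rw [conjTranspose_eq_transpose_of_trivial, transpose_transpose, hinv, Matrix.mul_smul,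
    Matrix.mul_one, Matrix.smul_mul] at hSchur
  have hHerm : (P - c⁻¹ • (Aᵀ * A)).IsHermitian :=
    hP.sub ((isHermitian_conjTranspose_mul_self A).smul (.all _))
  have hquad (x : n → ℝ) :
      x ⬝ᵥ (P - c⁻¹ • (Aᵀ * A)) *ᵥ x = x ⬝ᵥ P *ᵥ x - c⁻¹ * (A *ᵥ x ⬝ᵥ A *ᵥ x) := by
    rw [sub_mulVec, smul_mulVec, ← mulVec_mulVec, dotProduct_sub, dotProduct_smul,
      dotProduct_mulVec x Aᵀ, vecMul_transpose, smul_eq_mul]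
  simp only [hSchur, posSemidef_iff_dotProduct_mulVec, hHerm, star_trivial, hquad, sub_nonneg,
    true_and, inv_mul_le_iff₀ hc]

theorem forall_le_of_dotProduct_mulVec_le_one_iff {P : Matrix n n ℝ} (hP : P.PosDef)
    {q : (n → ℝ) → ℝ} (hq : ∀ (t : ℝ) z, q (t • z) = t ^ 2 * q z) {c : ℝ} (hc : 0 ≤ c) :
    (∀ z, z ⬝ᵥ P *ᵥ z ≤ 1 → q z ≤ c) ↔ ∀ z, q z ≤ c * (z ⬝ᵥ P *ᵥ z) := by
  refine ⟨fun h z => ?_, fun h z hz => (h z).trans (mul_le_of_le_one_right hc hz)⟩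
  rcases eq_or_ne z 0 with rfl | hz
  · simpa using (hq 0 0).le
  have hpos : 0 < z ⬝ᵥ P *ᵥ z := by simpa using hP.dotProduct_mulVec_pos hz
  set s := √(z ⬝ᵥ P *ᵥ z)
  have hs : 0 < s := Real.sqrt_pos.mpr hpos
  have hss : s ^ 2 = z ⬝ᵥ P *ᵥ z := Real.sq_sqrt hpos.le
  have hunit : (s⁻¹ • z) ⬝ᵥ P *ᵥ (s⁻¹ • z) = 1 := by
    rw [mulVec_smul, smul_dotProduct, dotProduct_smul, smul_eq_mul, smul_eq_mul, ← hss]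
    field_simp
  have hle := h _ hunit.le
  rwa [hq, inv_pow, inv_mul_le_iff₀ (by positivity), hss, mul_comm] at hle

end Matrix

theorem stmt5_general (n m : ℕ) (ℓ : ℝ) (hℓ : 0 < ℓ)
    (K C : Matrix (Fin m) (Fin n) ℝ) (P : Matrix (Fin n) (Fin n) ℝ) (hP : P.PosDef) :
    (M2mat K C P ℓ).PosSemidef ↔
      ∀ z : Fin n → ℝ, z ⬝ᵥ P.mulVec z ≤ 1 →
        Real.sqrt (∑ j, ((K - C).mulVec z j) ^ 2) ≤ ℓ := by
  have hnorm (z : Fin n → ℝ) :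
      √(∑ j, ((K - C) *ᵥ z) j ^ 2) ≤ ℓ ↔ (K - C) *ᵥ z ⬝ᵥ (K - C) *ᵥ z ≤ ℓ ^ 2 := by
    simp only [Real.sqrt_le_left hℓ.le, dotProduct, sq]
  have hhom (t : ℝ) (z : Fin n → ℝ) :
      (K - C) *ᵥ (t • z) ⬝ᵥ (K - C) *ᵥ (t • z) = t ^ 2 * ((K - C) *ᵥ z ⬝ᵥ (K - C) *ᵥ z) := by
    rw [mulVec_smul, smul_dotProduct, dotProduct_smul, smul_eq_mul, smul_eq_mul, ← mul_assoc, sq]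
  simp only [hnorm]
  rw [M2mat, posSemidef_fromBlocks_transpose_smul_one_iff hP.isHermitian _ (by positivity),
    forall_le_of_dotProduct_mulVec_le_one_iff hP hhom (sq_nonneg ℓ)]

theorem stmt5 (n m : ℕ) (hn : 0 < n) (hm : 0 < m) (ℓ : ℝ) (hℓ : 0 < ℓ)
    (K C : Matrix (Fin m) (Fin n) ℝ) (P : Matrix (Fin n) (Fin n) ℝ) (hP : P.PosDef) :
    (M2mat K C P ℓ).PosSemidef ↔
      ∀ z : Fin n → ℝ, z ⬝ᵥ P.mulVec z ≤ 1 →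
        Real.sqrt (∑ j, ((K - C).mulVec z j) ^ 2) ≤ ℓ :=
  stmt5_general n m ℓ hℓ K C P hP
end

section
/- Let n, m ∈ ℕ*, A ∈ ℝ^{n×n}, B ∈ ℝ^{n×m}, K, C ∈ ℝ^{m×n}, ℓ > 0, let P ∈ ℝ^{n×n} be symmetric positive definite and D ∈ ℝ^{m×m} diagonal with positive diagonal entries, and assume M1 < 0 and M2 ≥ 0. Then there exist M ≥ 1 and a > 0 such that every solution z : [0,∞) → ℝⁿ of the saturated closed-loop system ż = Az + B·sat_ℓ(Kz) whose initial condition satisfies z(0)ᵀP z(0) ≤ 1 satisfies z(t)ᵀP z(t) ≤ 1 and |z(t)| ≤ M·e^{−a t}·|z(0)| for all t ≥ 0, where |·| is the Euclidean norm. -/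
/-!
`V z = zᵀ P z` is a Lyapunov function on the ellipsoid `V ≤ 1`. There `M2 ≥ 0` gives
`|((K - C) z)ₖ| ≤ ℓ`, so the deadzone `φ = sat(K z) - K z` satisfies the generalized sector
condition `φᵀ D (C z + φ) ≤ 0`, and along solutions
`V̇ = (z, φ)ᵀ M1 (z, φ) + 2 φᵀ D (C z + φ) ≤ -a V` because `M1 < 0`. Hence the ellipsoid is
forward invariant, `V` decays like `e^{-a t}`, and since `V` is comparable to `|z|²` the state
decays exponentially.
-/

open Matrix

/-- Euclidean norm on `ℝⁿ`. -/
noncomputable def euclNorm {n : ℕ} (z : Fin n → ℝ) : ℝ :=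
  Real.sqrt (∑ i, (z i) ^ 2)

section QuadraticForm

variable {ι : Type*} [Fintype ι]

theorem smul_dotProduct_mulVec_smul (Q : Matrix ι ι ℝ) (c : ℝ) (x : ι → ℝ) :
    (c • x) ⬝ᵥ Q *ᵥ (c • x) = c ^ 2 * (x ⬝ᵥ Q *ᵥ x) := by
  simp only [mulVec_smul, smul_dotProduct, dotProduct_smul, smul_eq_mul]
  ring

theorem continuous_dotProduct_mulVec (Q : Matrix ι ι ℝ) :
    Continuous fun x : ι → ℝ => x ⬝ᵥ Q *ᵥ x :=
  continuous_id.dotProduct (continuous_const.matrix_mulVec continuous_id)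

/-- Compare both forms on the (compact) unit sphere and extend by homogeneity. -/
theorem Matrix.PosDef.exists_pos_mul_le {Q : Matrix ι ι ℝ} (hQ : Q.PosDef)
    (R : Matrix ι ι ℝ) : ∃ ε > 0, ∀ x : ι → ℝ, ε * (x ⬝ᵥ R *ᵥ x) ≤ x ⬝ᵥ Q *ᵥ x := by
  rcases isEmpty_or_nonempty ι with _ | _
  · exact ⟨1, one_pos, fun x => by simp [dotProduct]⟩
  have hS := isCompact_sphere (0 : ι → ℝ) 1
  have hSne : (Metric.sphere (0 : ι → ℝ) 1).Nonempty := NormedSpace.sphere_nonempty.2 zero_le_one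
  obtain ⟨u₀, hu₀, hmin⟩ := hS.exists_isMinOn hSne (continuous_dotProduct_mulVec Q).continuousOn
  obtain ⟨u₁, -, hmax⟩ := hS.exists_isMaxOn hSne (continuous_dotProduct_mulVec R).continuousOn
  set m := u₀ ⬝ᵥ Q *ᵥ u₀
  set r := u₁ ⬝ᵥ R *ᵥ u₁
  have hm : 0 < m := by
    simpa using hQ.dotProduct_mulVec_pos (ne_zero_of_mem_sphere one_ne_zero ⟨u₀, hu₀⟩)
  have hunit : ∀ u ∈ Metric.sphere (0 : ι → ℝ) 1,
      m / (|r| + 1) * (u ⬝ᵥ R *ᵥ u) ≤ u ⬝ᵥ Q *ᵥ u := fun u hu =>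
    calc m / (|r| + 1) * (u ⬝ᵥ R *ᵥ u) ≤ m / (|r| + 1) * (|r| + 1) := by
          gcongr
          exact (hmax hu).trans ((le_abs_self r).trans (le_add_of_nonneg_right zero_le_one))
      _ = m := div_mul_cancel₀ m (by positivity)
      _ ≤ u ⬝ᵥ Q *ᵥ u := hmin hu
  refine ⟨m / (|r| + 1), by positivity, fun x => ?_⟩
  rcases eq_or_ne x 0 with rfl | hx
  · simp
  have hx' : ‖x‖ ≠ 0 := norm_ne_zero_iff.2 hx
  have hu : ‖x‖⁻¹ • x ∈ Metric.sphere (0 : ι → ℝ) 1 := by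
    simp [norm_smul, hx']
  have hxu : ‖x‖ • ‖x‖⁻¹ • x = x := by rw [smul_smul, mul_inv_cancel₀ hx', one_smul]
  have hscaled := mul_le_mul_of_nonneg_left (hunit _ hu) (sq_nonneg ‖x‖)
  rwa [mul_left_comm, ← smul_dotProduct_mulVec_smul, ← smul_dotProduct_mulVec_smul, hxu] at hscaled

end QuadraticForm

theorem HasDerivAt.dotProduct {ι : Type*} [Fintype ι] {f g : ℝ → ι → ℝ} {f' g' : ι → ℝ}
    {t : ℝ} (hf : HasDerivAt f f' t) (hg : HasDerivAt g g' t) :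
    HasDerivAt (fun s => f s ⬝ᵥ g s) (f' ⬝ᵥ g t + f t ⬝ᵥ g') t := by
  change HasDerivAt (fun s => ∑ i, f s i * g s i) (∑ i, f' i * g t i + ∑ i, f t i * g' i) t
  rw [← Finset.sum_add_distrib]
  exact HasDerivAt.fun_sum fun i _ => (hasDerivAt_pi.1 hf i).mul (hasDerivAt_pi.1 hg i)

theorem HasDerivAt.matrix_mulVec {ι κ : Type*} [Fintype κ] (M : Matrix ι κ ℝ)
    {f : ℝ → κ → ℝ} {f' : κ → ℝ} {t : ℝ} (hf : HasDerivAt f f' t) :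
    HasDerivAt (fun s => M *ᵥ f s) (M *ᵥ f') t :=
  hasDerivAt_pi.2 fun i =>
    HasDerivAt.fun_sum fun j _ => (hasDerivAt_pi.1 hf j).const_mul (M i j)

theorem le_of_hasDerivAt_neg_at_level {f f' : ℝ → ℝ} {r : ℝ}
    (hf : ∀ t, 0 ≤ t → HasDerivAt f (f' t) t) (h0 : f 0 ≤ r)
    (hlevel : ∀ t, 0 ≤ t → f t = r → f' t < 0) {t : ℝ} (ht : 0 ≤ t) : f t ≤ r :=
  image_le_of_deriv_right_lt_deriv_boundary
    (fun s hs => (hf s hs.1).continuousAt.continuousWithinAt)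
    (fun s hs => (hf s hs.1).hasDerivWithinAt) h0 (fun _ => hasDerivAt_const _ r)
    (fun s hs => hlevel s hs.1) (Set.right_mem_Icc.2 ht)

/-- `exp (a t) * f t` is antitone. -/
theorem le_mul_exp_of_hasDerivAt_le {f f' : ℝ → ℝ} {a : ℝ}
    (hf : ∀ t, 0 ≤ t → HasDerivAt f (f' t) t) (hf' : ∀ t, 0 ≤ t → f' t ≤ -a * f t)
    {t : ℝ} (ht : 0 ≤ t) : f t ≤ f 0 * Real.exp (-a * t) := by
  have hg : ∀ s, 0 ≤ s → HasDerivAt (fun s => Real.exp (a * s) * f s)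
      (Real.exp (a * s) * a * f s + Real.exp (a * s) * f' s) s := fun s hs => by
    simpa using ((hasDerivAt_id s).const_mul a).exp.fun_mul (hf s hs)
  have hanti : AntitoneOn (fun s => Real.exp (a * s) * f s) (Set.Ici 0) := by
    refine antitoneOn_of_hasDerivWithinAt_nonpos (convex_Ici 0)
      (fun s hs => (hg s hs).continuousAt.continuousWithinAt)
      (fun s hs => (hg s (interior_subset hs)).hasDerivWithinAt) fun s hs => ?_
    have hs : 0 ≤ s := interior_subset hs
    have := mul_le_mul_of_nonneg_left (hf' s hs) (Real.exp_pos (a * s)).le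
    linarith
  have := hanti Set.self_mem_Ici ht ht
  simp only [mul_zero, Real.exp_zero, one_mul] at this
  calc f t = Real.exp (-a * t) * (Real.exp (a * t) * f t) := by
        rw [← mul_assoc, ← Real.exp_add]; simp
    _ ≤ Real.exp (-a * t) * f 0 := by gcongr
    _ = f 0 * Real.exp (-a * t) := mul_comm _ _

theorem satv_sub_mul_add_nonpos {m : ℕ} {ℓ c : ℝ} {v : Fin m → ℝ} {k : Fin m}
    (h : |v k - c| ≤ ℓ) : (satv ℓ v k - v k) * (satv ℓ v k - v k + c) ≤ 0 := by
  unfold satv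
  split_ifs with hk
  · simp
  rw [abs_le] at h
  rcases lt_or_gt_of_ne (show v k ≠ 0 by rintro h0; simp [h0] at hk; linarith) with hneg | hpos
  · rw [abs_of_neg hneg, mul_div_assoc, div_neg, div_self hneg.ne, mul_neg_one]
    rw [abs_of_neg hneg] at hk
    nlinarith
  · rw [abs_of_pos hpos, mul_div_assoc, div_self hpos.ne', mul_one]
    rw [abs_of_pos hpos] at hk
    nlinarith

theorem dotProduct_diag_mulVec_nonpos_of_sector {m : ℕ} {ℓ : ℝ} {D : Matrix (Fin m) (Fin m) ℝ}
    (hD : D.IsDiag) (hDnonneg : ∀ i, 0 ≤ D i i) {u w : Fin m → ℝ}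
    (h : ∀ k, |u k - w k| ≤ ℓ) : (satv ℓ u - u) ⬝ᵥ D *ᵥ (w + (satv ℓ u - u)) ≤ 0 := by
  rw [← (isDiag_iff_diagonal_diag D).1 hD]
  refine Finset.sum_nonpos fun k _ => ?_
  rw [mulVec_diagonal, diag_apply, mul_left_comm]
  refine mul_nonpos_of_nonneg_of_nonpos (hDnonneg k) ?_
  simpa [add_comm] using satv_sub_mul_add_nonpos (h k)

section ClosedLoop

variable {n m : ℕ} (A : Matrix (Fin n) (Fin n) ℝ) (B : Matrix (Fin n) (Fin m) ℝ)
  (K C : Matrix (Fin m) (Fin n) ℝ) (P : Matrix (Fin n) (Fin n) ℝ) (D : Matrix (Fin m) (Fin m) ℝ)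

theorem dotProduct_M1mat_mulVec (z : Fin n → ℝ) (φ : Fin m → ℝ) :
    Sum.elim z φ ⬝ᵥ M1mat A B K C P D *ᵥ Sum.elim z φ
      = ((A + B * K) *ᵥ z + B *ᵥ φ) ⬝ᵥ P *ᵥ z + z ⬝ᵥ P *ᵥ ((A + B * K) *ᵥ z + B *ᵥ φ)
        - 2 * (φ ⬝ᵥ D *ᵥ (C *ᵥ z + φ)) := by
  simp only [M1mat, fromBlocks_mulVec, sumElim_dotProduct_sumElim, add_mulVec, sub_mulVec,
    ← mulVec_mulVec, smul_mulVec, mulVec_add, dotProduct_add, add_dotProduct, dotProduct_sub,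
    dotProduct_smul, dotProduct_mulVec _ (_ᵀ), vecMul_transpose, smul_eq_mul,
    Sum.elim_comp_inl, Sum.elim_comp_inr]
  rw [dotProduct_comm (D *ᵥ (C *ᵥ z)) φ]
  ring

variable {K C P}

/-- Schur complement: test `M2mat ≥ 0` on `(ℓ² z, -(K - C) z)`. -/
theorem dotProduct_self_le_of_M2mat {ℓ : ℝ} (hℓ : 0 < ℓ) (hM2 : (M2mat K C P ℓ).PosSemidef)
    (z : Fin n → ℝ) : (K - C) *ᵥ z ⬝ᵥ (K - C) *ᵥ z ≤ ℓ ^ 2 * (z ⬝ᵥ P *ᵥ z) := by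
  have h := hM2.dotProduct_mulVec_nonneg (Sum.elim (ℓ ^ 2 • z) (-((K - C) *ᵥ z)))
  simp only [M2mat, fromBlocks_mulVec, sumElim_dotProduct_sumElim, star_trivial,
    Sum.elim_comp_inl, Sum.elim_comp_inr, mulVec_smul, mulVec_neg, smul_mulVec, one_mulVec,
    dotProduct_mulVec _ (_ᵀ), vecMul_transpose, dotProduct_add, dotProduct_smul,
    smul_dotProduct, dotProduct_neg, neg_dotProduct, smul_eq_mul] at h
  have : 0 ≤ ℓ ^ 2 * (ℓ ^ 2 * (z ⬝ᵥ P *ᵥ z) - (K - C) *ᵥ z ⬝ᵥ (K - C) *ᵥ z) := by linarith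
  linarith [nonneg_of_mul_nonneg_right this (by positivity)]

theorem abs_mulVec_sub_le_of_M2mat {ℓ : ℝ} (hℓ : 0 < ℓ) (hM2 : (M2mat K C P ℓ).PosSemidef)
    {z : Fin n → ℝ} (hz : z ⬝ᵥ P *ᵥ z ≤ 1) (k : Fin m) : |(K *ᵥ z) k - (C *ᵥ z) k| ≤ ℓ := by
  refine abs_le_of_sq_le_sq ?_ hℓ.le
  calc ((K *ᵥ z) k - (C *ᵥ z) k) ^ 2 ≤ (K - C) *ᵥ z ⬝ᵥ (K - C) *ᵥ z := by
        simpa [sub_mulVec, dotProduct, sq] using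
          Finset.single_le_sum (f := fun i => ((K - C) *ᵥ z) i ^ 2)
            (fun i _ => sq_nonneg _) (Finset.mem_univ k)
    _ ≤ ℓ ^ 2 * (z ⬝ᵥ P *ᵥ z) := dotProduct_self_le_of_M2mat hℓ hM2 z
    _ ≤ ℓ ^ 2 := mul_le_of_le_one_right (sq_nonneg ℓ) hz

variable {D}

/-- Inside the ellipsoid `zᵀPz ≤ 1` the deadzone `φ = sat(Kz) - Kz` lies in the sector
`φᵀD(Cz + φ) ≤ 0`, which is the term dropped here. -/
theorem lyapunov_deriv_le_M1mat {ℓ : ℝ} (hℓ : 0 < ℓ) (hD : D.IsDiag) (hDnonneg : ∀ i, 0 ≤ D i i)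
    (hM2 : (M2mat K C P ℓ).PosSemidef) {z : Fin n → ℝ} (hz : z ⬝ᵥ P *ᵥ z ≤ 1) :
    (A *ᵥ z + B *ᵥ satv ℓ (K *ᵥ z)) ⬝ᵥ P *ᵥ z + z ⬝ᵥ P *ᵥ (A *ᵥ z + B *ᵥ satv ℓ (K *ᵥ z))
      ≤ Sum.elim z (satv ℓ (K *ᵥ z) - K *ᵥ z) ⬝ᵥ M1mat A B K C P D *ᵥ
          Sum.elim z (satv ℓ (K *ᵥ z) - K *ᵥ z) := by
  set φ := satv ℓ (K *ᵥ z) - K *ᵥ z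
  have hfeedback : A *ᵥ z + B *ᵥ satv ℓ (K *ᵥ z) = (A + B * K) *ᵥ z + B *ᵥ φ := by
    rw [mulVec_sub, add_mulVec, ← mulVec_mulVec]
    abel
  have hsector : φ ⬝ᵥ D *ᵥ (C *ᵥ z + φ) ≤ 0 :=
    dotProduct_diag_mulVec_nonpos_of_sector hD hDnonneg (abs_mulVec_sub_le_of_M2mat hℓ hM2 hz)
  rw [hfeedback, dotProduct_M1mat_mulVec]
  linarith

end ClosedLoop

theorem euclNorm_le_of_dotProduct_self_le {n : ℕ} {x y : Fin n → ℝ} {c : ℝ} (hc : 0 ≤ c)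
    (h : x ⬝ᵥ x ≤ c ^ 2 * (y ⬝ᵥ y)) : euclNorm x ≤ c * euclNorm y := by
  have hsq : ∀ v : Fin n → ℝ, ∑ i, v i ^ 2 = v ⬝ᵥ v := fun v => by simp [dotProduct, sq]
  rw [euclNorm, euclNorm, hsq, hsq, ← Real.sqrt_sq hc, ← Real.sqrt_mul (sq_nonneg c)]
  exact Real.sqrt_le_sqrt h

theorem euclNorm_le_of_quadForm_le {n : ℕ} {P : Matrix (Fin n) (Fin n) ℝ} {c ε k : ℝ}
    (hc : 0 < c) (hε : 0 < ε) (hk : 0 ≤ k) (hlow : ∀ x, c * (x ⬝ᵥ x) ≤ x ⬝ᵥ P *ᵥ x)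
    (hup : ∀ x, ε * (x ⬝ᵥ P *ᵥ x) ≤ x ⬝ᵥ x) {x y : Fin n → ℝ}
    (h : x ⬝ᵥ P *ᵥ x ≤ k ^ 2 * (y ⬝ᵥ P *ᵥ y)) : euclNorm x ≤ k / √(c * ε) * euclNorm y := by
  refine euclNorm_le_of_dotProduct_self_le (by positivity) ?_
  have hx := hlow x
  have hy := hup y
  rw [div_pow, Real.sq_sqrt (by positivity), div_mul_eq_mul_div, le_div_iff₀ (by positivity)]
  nlinarith [sq_nonneg k]

theorem stmt7_general (n m : ℕ)
    (A : Matrix (Fin n) (Fin n) ℝ) (B : Matrix (Fin n) (Fin m) ℝ)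
    (K C : Matrix (Fin m) (Fin n) ℝ) (ℓ : ℝ) (hℓ : 0 < ℓ)
    (P : Matrix (Fin n) (Fin n) ℝ) (hP : P.PosDef)
    (D : Matrix (Fin m) (Fin m) ℝ) (hDdiag : D.IsDiag) (hDpos : ∀ i, 0 < D i i)
    (hM1 : (-(M1mat A B K C P D)).PosDef) (hM2 : (M2mat K C P ℓ).PosSemidef) :
    ∃ (M a : ℝ), 1 ≤ M ∧ 0 < a ∧
      ∀ z : ℝ → (Fin n → ℝ),
        (∀ t : ℝ, 0 ≤ t →
          HasDerivAt z (A.mulVec (z t) + B.mulVec (satv ℓ (K.mulVec (z t)))) t) →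
        z 0 ⬝ᵥ P.mulVec (z 0) ≤ 1 →
        ∀ t : ℝ, 0 ≤ t →
          z t ⬝ᵥ P.mulVec (z t) ≤ 1 ∧
          euclNorm (z t) ≤ M * Real.exp (-a * t) * euclNorm (z 0) := by
  obtain ⟨c, hc, hlow⟩ := hP.exists_pos_mul_le 1
  obtain ⟨ε, hε, hup⟩ := PosDef.one.exists_pos_mul_le P
  simp only [one_mulVec] at hlow hup
  obtain ⟨a, ha, hM1a⟩ := hM1.exists_pos_mul_le (fromBlocks P 0 0 0)
  refine ⟨max 1 (√(c * ε))⁻¹, a / 2, le_max_left _ _, by positivity, fun z hz hz0 t ht => ?_⟩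
  set V := fun s => z s ⬝ᵥ P *ᵥ z s
  set V' := fun s => (A *ᵥ z s + B *ᵥ satv ℓ (K *ᵥ z s)) ⬝ᵥ P *ᵥ z s
    + z s ⬝ᵥ P *ᵥ (A *ᵥ z s + B *ᵥ satv ℓ (K *ᵥ z s))
  have hV : ∀ s, 0 ≤ s → HasDerivAt V (V' s) s := fun s hs =>
    (hz s hs).dotProduct ((hz s hs).matrix_mulVec P)
  have hdecay : ∀ s, 0 ≤ s → V s ≤ 1 → V' s ≤ -a * V s := fun s _ hVs => by
    have hM1z := hM1a (Sum.elim (z s) (satv ℓ (K *ᵥ z s) - K *ᵥ z s))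
    simp only [fromBlocks_mulVec, sumElim_dotProduct_sumElim, zero_mulVec, add_zero,
      dotProduct_zero, Sum.elim_comp_inl, neg_mulVec, dotProduct_neg] at hM1z
    linarith [lyapunov_deriv_le_M1mat A B hℓ hDdiag (fun i => (hDpos i).le) hM2 hVs]
  have hinv : ∀ s, 0 ≤ s → V s ≤ 1 := fun s hs =>
    le_of_hasDerivAt_neg_at_level hV hz0 (fun r hr hVr => by nlinarith [hdecay r hr hVr.le]) hs
  have hexp := le_mul_exp_of_hasDerivAt_le hV (fun s hs => hdecay s hs (hinv s hs)) ht
  have hexp_sq : Real.exp (-(a / 2) * t) ^ 2 = Real.exp (-a * t) := by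
    rw [← Real.exp_nat_mul]; ring_nf
  refine ⟨hinv t ht, (euclNorm_le_of_quadForm_le hc hε (Real.exp_pos _).le hlow hup
    (hexp.trans_eq (by rw [hexp_sq, mul_comm]))).trans ?_⟩
  rw [div_eq_inv_mul]
  gcongr
  · exact Real.sqrt_nonneg _
  · exact le_max_right 1 (√(c * ε))⁻¹

theorem stmt7 (n m : ℕ) (hn : 0 < n) (hm : 0 < m)
    (A : Matrix (Fin n) (Fin n) ℝ) (B : Matrix (Fin n) (Fin m) ℝ)
    (K C : Matrix (Fin m) (Fin n) ℝ) (ℓ : ℝ) (hℓ : 0 < ℓ)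
    (P : Matrix (Fin n) (Fin n) ℝ) (hP : P.PosDef)
    (D : Matrix (Fin m) (Fin m) ℝ) (hDdiag : D.IsDiag) (hDpos : ∀ i, 0 < D i i)
    (hM1 : (-(M1mat A B K C P D)).PosDef) (hM2 : (M2mat K C P ℓ).PosSemidef) :
    ∃ (M a : ℝ), 1 ≤ M ∧ 0 < a ∧
      ∀ z : ℝ → (Fin n → ℝ),
        (∀ t : ℝ, 0 ≤ t →
          HasDerivAt z (A.mulVec (z t) + B.mulVec (satv ℓ (K.mulVec (z t)))) t) →
        z 0 ⬝ᵥ P.mulVec (z 0) ≤ 1 →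
        ∀ t : ℝ, 0 ≤ t →
          z t ⬝ᵥ P.mulVec (z t) ≤ 1 ∧
          euclNorm (z t) ≤ M * Real.exp (-a * t) * euclNorm (z 0) :=
  stmt7_general n m A B K C ℓ hℓ P hP D hDdiag hDpos hM1 hM2
end

section
/- Let n ∈ ℕ*, m = 1, A ∈ ℝ^{n×n}, B ∈ ℝ^{n×1}, K, C ∈ ℝ^{1×n}, ℓ > 0, and let P̃ ∈ ℝ^{n×n} be symmetric positive definite such that the matrix M̃1 := [[(A+BK)ᵀP̃ + P̃(A+BK), P̃B − Cᵀ],[BᵀP̃ − C, −2]] ∈ ℝ^{(n+1)×(n+1)} is negative definite. Then: (a) the set { D ≥ 0 : [[D·P̃, (K−C)ᵀ],[K−C, ℓ²]] is positive semidefinite } has a least element; and (b) for every D > 0 such that [[D·P̃, (K−C)ᵀ],[K−C, ℓ²]] is positive semidefinite, there exists α > 0 such that every z ∈ ℝⁿ with D·zᵀP̃z ≤ 1 satisfies 2D·zᵀP̃( Az + B·sat_ℓ(Kz) ) ≤ −α·|z|², where |·| is the Euclidean norm. -/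
/-!
(a) The admissible set of `D` is closed, since positive semidefiniteness is a closed condition
and the block matrix depends continuously on `D`; it is bounded below by `0`, and it is nonempty:
by the Schur complement with respect to the block `D • P̃`, the value
`D = (K - C) P̃⁻¹ (K - C)ᵀ / ℓ² + 1` is admissible. A closed nonempty set of reals bounded below
contains its infimum.

(b) If `D zᵀP̃z ≤ 1`, evaluating the semidefinite block matrix at `(z, -(K - C)z / ℓ²)` gives
`|(K - C)z| ≤ ℓ`. Then `sat_ℓ` lies in the sector `(s - sat_ℓ s)(w - sat_ℓ s) ≤ 0` at `s = Kz`,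
`w = (K - C)z`, and evaluating `M̃1 ≤ -ε I` at `(z, sat_ℓ(Kz) - Kz)` turns this sector inequality
into `2 zᵀP̃(Az + B sat_ℓ(Kz)) ≤ -ε |z|²`.
-/

open Matrix

/-- Scalar saturation function with level `ℓ`. -/
noncomputable def sats (ℓ : ℝ) (s : ℝ) : ℝ :=
  if |s| ≤ ℓ then s else ℓ * s / |s|

theorem sub_sats_mul_sub_sats_nonpos {ℓ w : ℝ} (s : ℝ) (hw : |w| ≤ ℓ) :
    (s - sats ℓ s) * (w - sats ℓ s) ≤ 0 := by
  unfold sats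
  split_ifs with hs
  · simp
  obtain ⟨hw₁, hw₂⟩ := abs_le.mp hw
  have hs₀ : s ≠ 0 := by
    rintro rfl
    exact hs (by simpa using (abs_nonneg w).trans hw)
  rcases hs₀.lt_or_gt with hneg | hpos
  · rw [abs_of_neg hneg] at hs ⊢
    rw [div_neg, mul_div_cancel_right₀ _ hneg.ne]
    nlinarith
  · rw [abs_of_pos hpos] at hs ⊢
    rw [mul_div_cancel_right₀ _ hpos.ne']
    nlinarith

namespace Matrix

variable {m n : Type*} [Fintype m] [Fintype n]

open scoped ComplexOrder

open scoped MatrixOrder in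
theorem PosDef.exists_pos_mul_dotProduct_self_le [DecidableEq n] {M : Matrix n n ℝ}
    (hM : M.PosDef) : ∃ r > 0, ∀ x : n → ℝ, r * (x ⬝ᵥ x) ≤ x ⬝ᵥ M *ᵥ x := by
  cases isEmpty_or_nonempty n
  · exact ⟨1, one_pos, fun x => by simp [dotProduct, Finset.univ_eq_empty]⟩
  obtain ⟨r, hr, hrM⟩ := (CFC.exists_pos_algebraMap_le_iff hM.isHermitian.isSelfAdjoint).2
    fun _ hx => hM.isStrictlyPositive.spectrum_pos hx
  refine ⟨r, hr, fun x => ?_⟩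
  have := (Matrix.le_iff.mp hrM).dotProduct_mulVec_nonneg x
  rw [Algebra.algebraMap_eq_smul_one, sub_mulVec, smul_mulVec, one_mulVec, dotProduct_sub,
    dotProduct_smul, smul_eq_mul] at this
  simpa using this

theorem isClosed_setOf_posSemidef {𝕜 : Type*} [RCLike 𝕜] :
    IsClosed {M : Matrix n n 𝕜 | M.PosSemidef} := by
  simp only [posSemidef_iff_dotProduct_mulVec, IsHermitian, Set.ofPred_and, Set.ofPred_forall]
  refine (isClosed_eq continuous_id.matrix_conjTranspose continuous_id).inter
    (isClosed_iInter fun x => isClosed_le continuous_const ?_)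
  exact continuous_const.dotProduct (continuous_id.matrix_mulVec continuous_const)

theorem exists_isLeast_nonneg_posSemidef {𝕜 : Type*} [RCLike 𝕜] {f : ℝ → Matrix n n 𝕜}
    (hf : Continuous f) (hne : ∃ D, 0 ≤ D ∧ (f D).PosSemidef) :
    ∃ D₀, IsLeast {D | 0 ≤ D ∧ (f D).PosSemidef} D₀ :=
  ⟨_, (isClosed_Ici.inter (isClosed_setOf_posSemidef.preimage hf)).isLeast_csInf hne
    ⟨0, fun _ hD => hD.1⟩⟩

theorem exists_fromBlocks_smul_posSemidef [DecidableEq n] {P : Matrix n n ℝ} (hP : P.PosDef)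
    (w : Matrix (Fin 1) n ℝ) {c : ℝ} (hc : 0 < c) :
    ∃ D : ℝ, 0 < D ∧ (fromBlocks (D • P) wᵀ w (c • 1)).PosSemidef := by
  set q := (w * P⁻¹ * wᵀ) 0 0
  have hq : 0 ≤ q := by
    simpa using (hP.inv.posSemidef.mul_mul_conjTranspose_same w).diag_nonneg (i := 0)
  have hD : 0 < q / c + 1 := by positivity
  refine ⟨q / c + 1, hD, ?_⟩
  have hDP := hP.smul hD
  have := hDP.isUnit.invertible
  have := invertibleOfNonzero hD.ne'
  have hw : wᵀᴴ = w := by rw [conjTranspose_eq_transpose_of_trivial, transpose_transpose]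
  have hSchur := PosDef.fromBlocks₁₁ wᵀ (c • 1) hDP
  rw [hw] at hSchur
  rw [hSchur, inv_smul _ _ ((isUnit_iff_isUnit_det P).mp hP.isUnit), invOf_eq_inv]
  have hdiag : c • 1 - w * ((q / c + 1)⁻¹ • P⁻¹) * wᵀ =
      diagonal fun _ => c - (q / c + 1)⁻¹ * q := by
    ext i j
    fin_cases i; fin_cases j
    simp [q]
  rw [hdiag, posSemidef_diagonal_iff]
  intro _
  rw [sub_nonneg, inv_mul_le_iff₀ hD]
  field_simp
  linarith

theorem sumElim_dotProduct_fromBlocks_mulVec_sumElim {R : Type*} [CommRing R]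
    (A : Matrix m m R) (B : Matrix m n R) (D : Matrix n n R) (x : m → R) (y : n → R) :
    (x ⊕ᵥ y) ⬝ᵥ fromBlocks A B Bᵀ D *ᵥ (x ⊕ᵥ y) =
      x ⬝ᵥ A *ᵥ x + 2 * (x ⬝ᵥ B *ᵥ y) + y ⬝ᵥ D *ᵥ y := by
  rw [fromBlocks_mulVec, sumElim_dotProduct_sumElim]
  simp only [Sum.elim_comp_inl, Sum.elim_comp_inr, dotProduct_add, mulVec_transpose,
    dotProduct_comm y, add_dotProduct, ← dotProduct_mulVec]
  ring

theorem mulVec_dotProduct_mulVec_self_le_of_fromBlocks_posSemidef [DecidableEq m]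
    {P : Matrix n n ℝ} (w : Matrix m n ℝ) {D ℓ : ℝ} (hℓ : ℓ ≠ 0)
    (h : (fromBlocks (D • P) wᵀ w (ℓ ^ 2 • (1 : Matrix m m ℝ))).PosSemidef) (z : n → ℝ) :
    w *ᵥ z ⬝ᵥ w *ᵥ z ≤ ℓ ^ 2 * (D * (z ⬝ᵥ P *ᵥ z)) := by
  set t := -(ℓ ^ 2)⁻¹ • w *ᵥ z
  have hx := h.dotProduct_mulVec_nonneg (z ⊕ᵥ t)
  have hquad := sumElim_dotProduct_fromBlocks_mulVec_sumElim (D • P) wᵀ (ℓ ^ 2 • 1) z t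
  rw [transpose_transpose] at hquad
  rw [star_trivial, hquad, mulVec_transpose, dotProduct_comm z (t ᵥ* w),
    ← dotProduct_mulVec] at hx
  simp only [t, smul_mulVec, one_mulVec, dotProduct_smul, smul_dotProduct, smul_eq_mul] at hx
  field_simp at hx
  rw [le_div_iff₀ (by positivity), zero_mul] at hx
  linarith

theorem dotProduct_transpose_mul_mulVec {R : Type*} [CommRing R] {P : Matrix n n R}
    (hP : Pᵀ = P) (X : Matrix n n R) (z : n → R) :
    z ⬝ᵥ (Xᵀ * P) *ᵥ z = z ⬝ᵥ P *ᵥ (X *ᵥ z) := by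
  rw [← mulVec_mulVec, mulVec_transpose, dotProduct_comm, ← dotProduct_mulVec,
    dotProduct_mulVec z, ← mulVec_transpose, hP]

theorem two_mul_dotProduct_mulVec_le_of_sector [DecidableEq m] (A : Matrix n n ℝ)
    (B : Matrix n m ℝ) (K C : Matrix m n ℝ) {P : Matrix n n ℝ} (hP : Pᵀ = P) (z : n → ℝ)
    (u : m → ℝ) (hu : (u - K *ᵥ z) ⬝ᵥ (C *ᵥ z + (u - K *ᵥ z)) ≤ 0) :
    2 * (z ⬝ᵥ P *ᵥ (A *ᵥ z + B *ᵥ u)) ≤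
      (z ⊕ᵥ (u - K *ᵥ z)) ⬝ᵥ fromBlocks ((A + B * K)ᵀ * P + P * (A + B * K)) (P * B - Cᵀ)
        (Bᵀ * P - C) ((-2 : ℝ) • 1) *ᵥ (z ⊕ᵥ (u - K *ᵥ z)) := by
  have hT : Bᵀ * P - C = (P * B - Cᵀ)ᵀ := by
    rw [transpose_sub, transpose_mul, hP, transpose_transpose]
  rw [hT, sumElim_dotProduct_fromBlocks_mulVec_sumElim, add_mulVec, dotProduct_add,
    dotProduct_transpose_mul_mulVec hP, ← mulVec_mulVec]
  obtain ⟨t, rfl⟩ : ∃ t, u = K *ᵥ z + t := ⟨u - K *ᵥ z, by abel⟩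
  rw [add_sub_cancel_left] at hu ⊢
  simp only [sub_mulVec, add_mulVec, mulVec_add, dotProduct_add, dotProduct_sub, ← mulVec_mulVec,
    mulVec_transpose, smul_mulVec, one_mulVec, dotProduct_smul, smul_eq_mul] at hu ⊢
  rw [dotProduct_comm z (t ᵥ* C), ← dotProduct_mulVec]
  linarith

theorem exists_pos_two_mul_dotProduct_mulVec_le_of_sector [DecidableEq n] [DecidableEq m]
    (A : Matrix n n ℝ) (B : Matrix n m ℝ) (K C : Matrix m n ℝ) {P : Matrix n n ℝ}
    (hP : Pᵀ = P)
    (hM : (-fromBlocks ((A + B * K)ᵀ * P + P * (A + B * K)) (P * B - Cᵀ)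
        (Bᵀ * P - C) ((-2 : ℝ) • (1 : Matrix m m ℝ))).PosDef) :
    ∃ ε > 0, ∀ (z : n → ℝ) (u : m → ℝ), (u - K *ᵥ z) ⬝ᵥ (C *ᵥ z + (u - K *ᵥ z)) ≤ 0 →
      2 * (z ⬝ᵥ P *ᵥ (A *ᵥ z + B *ᵥ u)) ≤ -ε * (z ⬝ᵥ z) := by
  obtain ⟨ε, hε, hcoer⟩ := hM.exists_pos_mul_dotProduct_self_le
  refine ⟨ε, hε, fun z u hu => ?_⟩
  have hlure := two_mul_dotProduct_mulVec_le_of_sector A B K C hP z u hu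
  have hx := hcoer (z ⊕ᵥ (u - K *ᵥ z))
  rw [neg_mulVec, dotProduct_neg, sumElim_dotProduct_sumElim] at hx
  have ht : 0 ≤ (u - K *ᵥ z) ⬝ᵥ (u - K *ᵥ z) := by
    simpa using dotProduct_self_star_nonneg (u - K *ᵥ z)
  nlinarith [mul_nonneg hε.le ht]

end Matrix

theorem abs_mulVec_apply_le_of_fromBlocks_posSemidef {n : Type*} [Fintype n]
    {P : Matrix n n ℝ} (w : Matrix (Fin 1) n ℝ) {D ℓ : ℝ} (hℓ : 0 < ℓ)
    (h : (fromBlocks (D • P) wᵀ w (ℓ ^ 2 • (1 : Matrix (Fin 1) (Fin 1) ℝ))).PosSemidef)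
    {z : n → ℝ} (hz : D * (z ⬝ᵥ P *ᵥ z) ≤ 1) :
    |(w *ᵥ z) 0| ≤ ℓ := by
  have hwz := mulVec_dotProduct_mulVec_self_le_of_fromBlocks_posSemidef w hℓ.ne' h z
  rw [show w *ᵥ z ⬝ᵥ w *ᵥ z = (w *ᵥ z) 0 ^ 2 by simp [dotProduct, sq]] at hwz
  refine abs_le_of_sq_le_sq ?_ hℓ.le
  nlinarith [mul_le_mul_of_nonneg_left hz (sq_nonneg ℓ)]

theorem sats_sub_mulVec_dotProduct_nonpos {n : Type*} [Fintype n] {ℓ : ℝ}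
    (K C : Matrix (Fin 1) n ℝ) (z : n → ℝ) (hw : |((K - C) *ᵥ z) 0| ≤ ℓ) :
    ((fun _ => sats ℓ ((K *ᵥ z) 0)) - K *ᵥ z) ⬝ᵥ
      (C *ᵥ z + ((fun _ => sats ℓ ((K *ᵥ z) 0)) - K *ᵥ z)) ≤ 0 := by
  have := sub_sats_mul_sub_sats_nonpos ((K *ᵥ z) 0) hw
  simp only [dotProduct, Finset.univ_unique, Finset.sum_singleton, Fin.default_eq_zero,
    Pi.sub_apply, Pi.add_apply, sub_mulVec] at this ⊢
  linarith

theorem stmt9_general (n : ℕ)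
    (A : Matrix (Fin n) (Fin n) ℝ) (B : Matrix (Fin n) (Fin 1) ℝ)
    (K C : Matrix (Fin 1) (Fin n) ℝ) (ℓ : ℝ) (hℓ : 0 < ℓ)
    (Pt : Matrix (Fin n) (Fin n) ℝ) (hPt : Pt.PosDef)
    (hM1 : (-(Matrix.fromBlocks ((A + B * K)ᵀ * Pt + Pt * (A + B * K))
        (Pt * B - Cᵀ) (Bᵀ * Pt - C)
        ((-2 : ℝ) • (1 : Matrix (Fin 1) (Fin 1) ℝ)))).PosDef) :
    (∃ D0 : ℝ, IsLeast {D : ℝ | 0 ≤ D ∧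
        (Matrix.fromBlocks (D • Pt) (K - C)ᵀ (K - C)
          (ℓ ^ 2 • (1 : Matrix (Fin 1) (Fin 1) ℝ))).PosSemidef} D0) ∧
    (∀ D : ℝ, 0 < D →
      (Matrix.fromBlocks (D • Pt) (K - C)ᵀ (K - C)
        (ℓ ^ 2 • (1 : Matrix (Fin 1) (Fin 1) ℝ))).PosSemidef →
      ∃ α : ℝ, 0 < α ∧ ∀ z : Fin n → ℝ, D * (z ⬝ᵥ Pt.mulVec z) ≤ 1 →
        2 * D * (z ⬝ᵥ Pt.mulVec
            (A.mulVec z + B.mulVec (fun _ => sats ℓ (K.mulVec z 0)))) ≤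
          -α * (∑ i, (z i) ^ 2)) := by
  refine ⟨exists_isLeast_nonneg_posSemidef
    (f := fun D => fromBlocks (D • Pt) (K - C)ᵀ (K - C) (ℓ ^ 2 • 1)) (by fun_prop) ?_,
    fun D hD hLMI => ?_⟩
  · obtain ⟨D, hD, hLMI⟩ := exists_fromBlocks_smul_posSemidef hPt (K - C) (pow_pos hℓ 2)
    exact ⟨D, hD.le, hLMI⟩
  have hPt_symm : Ptᵀ = Pt := (conjTranspose_eq_transpose_of_trivial Pt).symm.trans hPt.1
  obtain ⟨ε, hε, hdiss⟩ := exists_pos_two_mul_dotProduct_mulVec_le_of_sector A B K C hPt_symm hM1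
  refine ⟨D * ε, by positivity, fun z hz => ?_⟩
  have hw := abs_mulVec_apply_le_of_fromBlocks_posSemidef (K - C) hℓ hLMI hz
  set u : Fin 1 → ℝ := fun _ => sats ℓ ((K *ᵥ z) 0)
  have hsector := sats_sub_mulVec_dotProduct_nonpos K C z hw
  calc 2 * D * (z ⬝ᵥ Pt *ᵥ (A *ᵥ z + B *ᵥ u))
      = D * (2 * (z ⬝ᵥ Pt *ᵥ (A *ᵥ z + B *ᵥ u))) := by ring
    _ ≤ D * (-ε * (z ⬝ᵥ z)) := mul_le_mul_of_nonneg_left (hdiss z u hsector) hD.le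
    _ = -(D * ε) * ∑ i, z i ^ 2 := by simp only [dotProduct, sq]; ring

theorem stmt9 (n : ℕ) (hn : 0 < n)
    (A : Matrix (Fin n) (Fin n) ℝ) (B : Matrix (Fin n) (Fin 1) ℝ)
    (K C : Matrix (Fin 1) (Fin n) ℝ) (ℓ : ℝ) (hℓ : 0 < ℓ)
    (Pt : Matrix (Fin n) (Fin n) ℝ) (hPt : Pt.PosDef)
    (hM1 : (-(Matrix.fromBlocks ((A + B * K)ᵀ * Pt + Pt * (A + B * K))
        (Pt * B - Cᵀ) (Bᵀ * Pt - C)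
        ((-2 : ℝ) • (1 : Matrix (Fin 1) (Fin 1) ℝ)))).PosDef) :
    (∃ D0 : ℝ, IsLeast {D : ℝ | 0 ≤ D ∧
        (Matrix.fromBlocks (D • Pt) (K - C)ᵀ (K - C)
          (ℓ ^ 2 • (1 : Matrix (Fin 1) (Fin 1) ℝ))).PosSemidef} D0) ∧
    (∀ D : ℝ, 0 < D →
      (Matrix.fromBlocks (D • Pt) (K - C)ᵀ (K - C)
        (ℓ ^ 2 • (1 : Matrix (Fin 1) (Fin 1) ℝ))).PosSemidef →
      ∃ α : ℝ, 0 < α ∧ ∀ z : Fin n → ℝ, D * (z ⬝ᵥ Pt.mulVec z) ≤ 1 →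
        2 * D * (z ⬝ᵥ Pt.mulVec
            (A.mulVec z + B.mulVec (fun _ => sats ℓ (K.mulVec z 0)))) ≤
          -α * (∑ i, (z i) ^ 2)) :=
  stmt9_general n A B K C ℓ hℓ Pt hPt hM1
end

section
/- Let n, n_c ∈ ℕ*, let P ∈ ℝ^{n×n} and P̄ ∈ ℝ^{(n+n_c)×(n+n_c)} be symmetric positive definite matrices, and suppose that [I_n 0] P̄ [I_n; 0] − P is negative semidefinite, where [I_n 0] ∈ ℝ^{n×(n+n_c)} and [I_n; 0] ∈ ℝ^{(n+n_c)×n} (so [I_n 0] P̄ [I_n; 0] is the upper-left n×n block of P̄). Then the ellipsoid {z ∈ ℝⁿ : zᵀPz ≤ 1} is contained in the projection onto the first n coordinates of the ellipsoid {Z ∈ ℝ^{n+n_c} : ZᵀP̄Z ≤ 1}; that is, for every z ∈ ℝⁿ with zᵀPz ≤ 1 there exists z_c ∈ ℝ^{n_c} such that the vector Z = (z, z_c) satisfies ZᵀP̄Z ≤ 1. -/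
/-!
Take `z_c = 0`: the quadratic form of `P̄` at `(z, 0)` is that of its upper-left block at `z`,
which is dominated by `zᵀ P z ≤ 1` because `P` minus that block is positive semidefinite.
-/

open Matrix

theorem Matrix.sum_elim_zero_dotProduct_mulVec {m n R : Type*} [Fintype m] [Fintype n]
    [NonUnitalNonAssocSemiring R] (M : Matrix (m ⊕ n) (m ⊕ n) R) (z : m → R) :
    Sum.elim z 0 ⬝ᵥ M *ᵥ Sum.elim z 0 = z ⬝ᵥ M.toBlocks₁₁ *ᵥ z := by
  rw [← fromBlocks_toBlocks M, fromBlocks_mulVec]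
  simp [dotProduct, Fintype.sum_sum_type]

theorem Matrix.PosSemidef.dotProduct_mulVec_le_of_sub {m : Type*} [Fintype m]
    {A P : Matrix m m ℝ} (h : (P - A).PosSemidef) (z : m → ℝ) :
    z ⬝ᵥ A *ᵥ z ≤ z ⬝ᵥ P *ᵥ z := by
  have := h.dotProduct_mulVec_nonneg z
  rw [star_trivial, sub_mulVec, dotProduct_sub] at this
  linarith

theorem stmt10_general (n nc : ℕ)
    (P : Matrix (Fin n) (Fin n) ℝ)
    (Pbar : Matrix (Fin n ⊕ Fin nc) (Fin n ⊕ Fin nc) ℝ)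
    (h : (P - Pbar.toBlocks₁₁).PosSemidef) :
    ∀ z : Fin n → ℝ, z ⬝ᵥ P.mulVec z ≤ 1 →
      ∃ zc : Fin nc → ℝ,
        (Sum.elim z zc) ⬝ᵥ Pbar.mulVec (Sum.elim z zc) ≤ 1 := by
  intro z hz
  refine ⟨0, ?_⟩
  rw [sum_elim_zero_dotProduct_mulVec]
  exact (h.dotProduct_mulVec_le_of_sub z).trans hz

theorem stmt10 (n nc : ℕ) (hn : 0 < n) (hnc : 0 < nc)
    (P : Matrix (Fin n) (Fin n) ℝ)
    (Pbar : Matrix (Fin n ⊕ Fin nc) (Fin n ⊕ Fin nc) ℝ)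
    (hP : P.PosDef) (hPbar : Pbar.PosDef)
    (h : (P - Pbar.toBlocks₁₁).PosSemidef) :
    ∀ z : Fin n → ℝ, z ⬝ᵥ P.mulVec z ≤ 1 →
      ∃ zc : Fin nc → ℝ,
        (Sum.elim z zc) ⬝ᵥ Pbar.mulVec (Sum.elim z zc) ≤ 1 :=
  stmt10_general n nc P Pbar h
end

section
/- Let ℓ > 0, L > 0, k ∈ ℝ with |k| ≤ ℓ, let b ∈ L²(0,L), and let χ be the characteristic (indicator) function of the set U := { x ∈ (0,L) : |k·b(x)| > ℓ }. Then ‖ b·sat_ℓ(k) − sat_ℓ(k·b(·)) ‖₂ ≤ ℓ·‖ χ + |b|·χ ‖₂, where b·sat_ℓ(k) is the function x ↦ b(x)·sat_ℓ(k) and sat_ℓ(k·b(·)) is the function x ↦ sat_ℓ(k·b(x)). -/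
open MeasureTheory

section Saturation

variable {ℓ s : ℝ}

theorem sats_of_abs_le (h : |s| ≤ ℓ) : sats ℓ s = s := if_pos h

theorem abs_sats_le (hℓ : 0 ≤ ℓ) : |sats ℓ s| ≤ ℓ := by
  unfold sats
  split_ifs with h
  · exact h
  · have hs : |s| ≠ 0 := (hℓ.trans_lt (not_le.1 h)).ne'
    rw [abs_div, abs_mul, abs_abs, abs_of_nonneg hℓ, mul_div_assoc, div_self hs, mul_one]

variable {k t : ℝ}

theorem mul_sats_sub_sats_eq_zero (hk : |k| ≤ ℓ) (h : |k * t| ≤ ℓ) :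
    t * sats ℓ k - sats ℓ (k * t) = 0 := by
  rw [sats_of_abs_le hk, sats_of_abs_le h, mul_comm, sub_self]

theorem abs_mul_sats_sub_sats_le (hk : |k| ≤ ℓ) :
    |t * sats ℓ k - sats ℓ (k * t)| ≤ ℓ * (1 + |t|) := by
  have hℓ : 0 ≤ ℓ := (abs_nonneg k).trans hk
  calc |t * sats ℓ k - sats ℓ (k * t)|
      ≤ |t| * |k| + |sats ℓ (k * t)| := by
        rw [sats_of_abs_le hk, ← abs_mul]; exact abs_sub _ _
    _ ≤ |t| * ℓ + ℓ := by gcongr; exact abs_sats_le hℓ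
    _ = ℓ * (1 + |t|) := by ring

end Saturation

theorem stmt14_general (ℓ L : ℝ) (k : ℝ) (hk : |k| ≤ ℓ)
    (b : ℝ → ℝ)
    (χ : ℝ → ℝ)
    (hχ : χ = Set.indicator {x ∈ Set.Ioo 0 L | ℓ < |k * b x|} (fun _ => (1 : ℝ))) :
    eLpNorm (fun x => b x * sats ℓ k - sats ℓ (k * b x)) 2
        (volume.restrict (Set.Ioo 0 L)) ≤
      ENNReal.ofReal ℓ *
        eLpNorm (fun x => χ x + |b x| * χ x) 2 (volume.restrict (Set.Ioo 0 L)) := by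
  have hℓ : 0 ≤ ℓ := (abs_nonneg k).trans hk
  have hpointwise : ∀ᵐ x ∂(volume.restrict (Set.Ioo 0 L)),
      ‖b x * sats ℓ k - sats ℓ (k * b x)‖ ≤ ‖ℓ * (χ x + |b x| * χ x)‖ := by
    filter_upwards [ae_restrict_mem measurableSet_Ioo] with x hx
    subst hχ
    by_cases h : ℓ < |k * b x|
    · have hxU : x ∈ {x ∈ Set.Ioo 0 L | ℓ < |k * b x|} := ⟨hx, h⟩
      rw [Set.indicator_of_mem hxU, Real.norm_eq_abs, Real.norm_eq_abs, mul_one,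
        abs_of_nonneg (by positivity : 0 ≤ ℓ * (1 + |b x|))]
      exact abs_mul_sats_sub_sats_le hk
    · rw [Set.indicator_of_notMem (fun h' => h h'.2),
        mul_sats_sub_sats_eq_zero hk (not_lt.1 h)]
      simp
  calc eLpNorm (fun x => b x * sats ℓ k - sats ℓ (k * b x)) 2 (volume.restrict (Set.Ioo 0 L))
      ≤ eLpNorm (ℓ • fun x => χ x + |b x| * χ x) 2 (volume.restrict (Set.Ioo 0 L)) :=
        eLpNorm_mono_ae hpointwise
    _ = ENNReal.ofReal ℓ *
        eLpNorm (fun x => χ x + |b x| * χ x) 2 (volume.restrict (Set.Ioo 0 L)) := by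
        rw [eLpNorm_const_smul, Real.enorm_eq_ofReal hℓ]

theorem stmt14 (ℓ L : ℝ) (hℓ : 0 < ℓ) (hL : 0 < L) (k : ℝ) (hk : |k| ≤ ℓ)
    (b : ℝ → ℝ) (hb : MemLp b 2 (volume.restrict (Set.Ioo 0 L)))
    (χ : ℝ → ℝ)
    (hχ : χ = Set.indicator {x ∈ Set.Ioo 0 L | ℓ < |k * b x|} (fun _ => (1 : ℝ))) :
    eLpNorm (fun x => b x * sats ℓ k - sats ℓ (k * b x)) 2
        (volume.restrict (Set.Ioo 0 L)) ≤
      ENNReal.ofReal ℓ *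
        eLpNorm (fun x => χ x + |b x| * χ x) 2 (volume.restrict (Set.Ioo 0 L)) :=
  stmt14_general ℓ L k hk b χ hχ
end

section
/- Let n ∈ ℕ*, let λ₁, …, λₙ ∈ ℝ with λ_j ≥ 0 for every j, let Λ := diag(λ₁, …, λₙ) ∈ ℝ^{n×n}, and let b ∈ ℝ^{n×1}. Then there exists K ∈ ℝ^{1×n} such that Λ + bK is Hurwitz if and only if b_j ≠ 0 for every j ∈ {1,…,n} and λ_i ≠ λ_j whenever i ≠ j. -/
/-!
If `b j = 0`, or `λ i = λ j` for some `i ≠ j`, there is a left eigenvector `w` of `Λ` with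
`w b = 0`; it stays a left eigenvector of `Λ + b K` for every `K`, so an eigenvalue `λ i ≥ 0`
survives every feedback. Conversely, every eigenvalue of `Λ + b K` is a root of
`∏ j, (X - λ j) - ∑ j, b j K j ∏ i ≠ j, (X - λ i)`. When the `λ j` are distinct the polynomials
`∏ i ≠ j, (X - λ i)` span the polynomials of degree `< n`, so with all
`b j ≠ 0` the gains `K j` can be chosen to turn this polynomial into `(X + 1) ^ n`.
-/

open Matrix

/-- A real square matrix is Hurwitz if all its complex eigenvalues have negative real part. -/
def IsHurwitz {n : ℕ} (H : Matrix (Fin n) (Fin n) ℝ) : Prop :=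
  ∀ μ ∈ spectrum ℂ (H.map (fun x => (x : ℂ))), μ.re < 0

open Polynomial Finset Lagrange

variable {ι : Type*} [DecidableEq ι]

theorem Matrix.map_diagonal_add_mul {m R S : Type*} [Fintype m] [CommRing R] [CommRing S]
    (f : R →+* S) (d : ι → R) (u : Matrix ι m R) (k : Matrix m ι R) :
    (diagonal d + u * k).map f = diagonal (f ∘ d) + u.map f * k.map f := by
  rw [Matrix.map_add f (map_add f), Matrix.map_mul, diagonal_map (map_zero f)]
  rfl

variable [Fintype ι] {𝕜 : Type*} [Field 𝕜]

theorem Matrix.exists_mulVec_eq_smul_of_mem_spectrum {A : Matrix ι ι 𝕜} {μ : 𝕜}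
    (hμ : μ ∈ spectrum 𝕜 A) : ∃ v ≠ 0, A *ᵥ v = μ • v := by
  rw [mem_spectrum_iff_isRoot_charpoly, IsRoot.def, eval_charpoly,
    ← exists_mulVec_eq_zero_iff] at hμ
  obtain ⟨v, hv, h⟩ := hμ
  refine ⟨v, hv, ?_⟩
  rw [sub_mulVec, sub_eq_zero] at h
  simpa [scalar_apply, smul_mulVec] using h.symm

theorem Matrix.mem_spectrum_of_vecMul_eq_smul {A : Matrix ι ι 𝕜} {μ : 𝕜} {w : ι → 𝕜}
    (hw : w ≠ 0) (h : w ᵥ* A = μ • w) : μ ∈ spectrum 𝕜 A := by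
  rw [mem_spectrum_iff_isRoot_charpoly, IsRoot.def, eval_charpoly,
    ← exists_vecMul_eq_zero_iff]
  refine ⟨w, hw, ?_⟩
  rw [vecMul_sub, h, sub_eq_zero]
  simp [scalar_apply]

theorem Matrix.vecMul_diagonal_add_mul_of_vecMul_eq_zero {m R : Type*} [Fintype m]
    [CommSemiring R] (d : ι → R) (u : Matrix ι m R) (k : Matrix m ι R) {w : ι → R}
    (hw : w ᵥ* u = 0) : w ᵥ* (diagonal d + u * k) = w * d := by
  rw [vecMul_add, ← vecMul_vecMul, hw, zero_vecMul, add_zero]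
  ext i
  simp [vecMul_diagonal]

theorem Matrix.mem_spectrum_diagonal_add_mul_of_eq_zero (d : ι → 𝕜) (u : Matrix ι (Fin 1) 𝕜)
    (k : Matrix (Fin 1) ι 𝕜) {j : ι} (hj : u j 0 = 0) : d j ∈ spectrum 𝕜 (diagonal d + u * k) := by
  have hw : Pi.single j 1 ᵥ* u = 0 := by
    ext a
    simp [Fin.fin_one_eq_zero a, hj]
  refine mem_spectrum_of_vecMul_eq_smul (w := Pi.single j 1) (by simp) ?_
  rw [vecMul_diagonal_add_mul_of_vecMul_eq_zero d u k hw]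
  ext i
  by_cases hij : i = j <;> simp [hij]

theorem Matrix.mem_spectrum_diagonal_add_mul_of_eq (d : ι → 𝕜) (u : Matrix ι (Fin 1) 𝕜)
    (k : Matrix (Fin 1) ι 𝕜) {i j : ι} (hij : i ≠ j) (hd : d i = d j) :
    d i ∈ spectrum 𝕜 (diagonal d + u * k) := by
  by_cases hj : u j 0 = 0
  · exact hd ▸ mem_spectrum_diagonal_add_mul_of_eq_zero d u k hj
  set w : ι → 𝕜 := Pi.single i (u j 0) - Pi.single j (u i 0)
  have hw0 : w ≠ 0 := fun h => hj (by simpa [w, hij] using congrFun h i)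
  have hw : w ᵥ* u = 0 := by
    ext a
    simp [w, Fin.fin_one_eq_zero a, sub_vecMul, mul_comm]
  refine mem_spectrum_of_vecMul_eq_smul hw0 ?_
  rw [vecMul_diagonal_add_mul_of_vecMul_eq_zero d u k hw]
  ext l
  by_cases hli : l = i <;> by_cases hlj : l = j <;> simp [w, Pi.single_apply, hli, hlj, hd, mul_comm]

/-- With `c j = u j 0 * k 0 j` this is the characteristic polynomial of `diagonal d + u * k`
(matrix determinant lemma); all that is needed is that it vanishes on the spectrum. -/
noncomputable def closedLoopPoly {R : Type*} [CommRing R] (d c : ι → R) : R[X] :=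
  nodal univ d - ∑ j, C (c j) * nodal (univ.erase j) d

section closedLoopPoly

variable {R : Type*} [CommRing R]

theorem eval_closedLoopPoly (d c : ι → R) (x : R) :
    (closedLoopPoly d c).eval x = ∏ j, (x - d j) - ∑ j, c j * ∏ i ∈ univ.erase j, (x - d i) := by
  simp [closedLoopPoly, eval_nodal, eval_finsetSum]

theorem eval_closedLoopPoly_at_node (d c : ι → R) (i : ι) :
    (closedLoopPoly d c).eval (d i) = -(c i * ∏ l ∈ univ.erase i, (d i - d l)) := by
  rw [closedLoopPoly, eval_sub, eval_nodal_at_node (mem_univ i), eval_finsetSum,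
    sum_eq_single i, eval_mul, eval_C, eval_nodal, zero_sub]
  · intro j _ hji
    rw [eval_mul, eval_nodal_at_node (mem_erase.mpr ⟨Ne.symm hji, mem_univ i⟩), mul_zero]
  · exact fun h => absurd (mem_univ i) h

theorem mul_eval_closedLoopPoly_eq_zero {d u k v : ι → R} {μ : R}
    (hv : ∀ i, (μ - d i) * v i = (∑ j, k j * v j) * u i) :
    (∑ j, k j * v j) * (closedLoopPoly d (u * k)).eval μ = 0 := by
  have hprod : (∑ j, k j * v j) * ∏ j, (μ - d j) =
      ∑ j, (∑ j, k j * v j) * (u j * k j) * ∏ i ∈ univ.erase j, (μ - d i) := by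
    rw [sum_mul]
    refine sum_congr rfl fun j _ => ?_
    rw [← mul_prod_erase _ _ (mem_univ j)]
    linear_combination (k j * ∏ i ∈ univ.erase j, (μ - d i)) * hv j
  simp only [eval_closedLoopPoly, Pi.mul_apply, mul_sub, hprod, mul_sum, mul_assoc, sub_self]

theorem closedLoopPoly_map {S : Type*} [CommRing S] (f : R →+* S) (d c : ι → R) :
    (closedLoopPoly d c).map f = closedLoopPoly (f ∘ d) (f ∘ c) := by
  simp [closedLoopPoly, nodal_eq, Polynomial.map_prod, Polynomial.map_sum]

end closedLoopPoly

theorem eval_closedLoopPoly_eq_zero_of_mem_spectrum {d : ι → 𝕜} (hd : Function.Injective d)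
    (u : Matrix ι (Fin 1) 𝕜) (k : Matrix (Fin 1) ι 𝕜) {μ : 𝕜}
    (hμ : μ ∈ spectrum 𝕜 (diagonal d + u * k)) :
    (closedLoopPoly d fun j => u j 0 * k 0 j).eval μ = 0 := by
  obtain ⟨v, hv0, hv⟩ := exists_mulVec_eq_smul_of_mem_spectrum hμ
  set α := ∑ j, k 0 j * v j
  have hcomp : ∀ i, (μ - d i) * v i = α * u i 0 := by
    intro i
    have := congrFun hv i
    simp only [add_mulVec, ← mulVec_mulVec, mulVec_diagonal, Pi.add_apply, Pi.smul_apply,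
      smul_eq_mul] at this
    simp only [mulVec, dotProduct, Fin.sum_univ_one] at this
    linear_combination -this
  have hroot := mul_eval_closedLoopPoly_eq_zero hcomp
  by_cases hα : α = 0
  -- Then `v` is an eigenvector of `diagonal d`, supported at a single node `i` with `k 0 i = 0`.
  · obtain ⟨i, hi⟩ : ∃ i, v i ≠ 0 := Function.ne_iff.mp hv0
    have hμi : μ = d i := by
      have := hcomp i
      rw [hα, zero_mul] at this
      exact sub_eq_zero.mp ((mul_eq_zero.mp this).resolve_right hi)
    have hvl : ∀ l ≠ i, v l = 0 := by
      intro l hl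
      have := hcomp l
      rw [hα, zero_mul, hμi] at this
      exact (mul_eq_zero.mp this).resolve_left (sub_ne_zero.mpr (hd.ne (Ne.symm hl)))
    have hki : k 0 i = 0 := by
      have : α = k 0 i * v i := by
        simp only [α]
        exact sum_eq_single i (fun l _ hl => by rw [hvl l hl, mul_zero]) (by simp)
      exact (mul_eq_zero.mp (hα ▸ this).symm).resolve_right hi
    rw [hμi, eval_closedLoopPoly_at_node, hki]
    simp
  · exact (mul_eq_zero.mp hroot).resolve_left hα

theorem closedLoopPoly_neg_eval_mul_nodalWeight {d : ι → 𝕜} (hd : Function.Injective d) {p : 𝕜[X]}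
    (hp : p.IsMonicOfDegree (Fintype.card ι)) :
    closedLoopPoly d (fun j => -(p.eval (d j) * nodalWeight univ d j)) = p := by
  have hlt : (p - nodal univ d).degree < #(univ : Finset ι) := by
    have hnodal : (nodal univ d).degree = p.degree := by
      rw [degree_nodal, degree_eq_natDegree hp.ne_zero, hp.natDegree_eq, card_univ]
    calc (p - nodal univ d).degree < p.degree :=
          degree_sub_lt_left hnodal.symm hp.ne_zero
            (by rw [hp.leadingCoeff_eq, nodal_monic.leadingCoeff])
      _ = #univ := by rw [← hnodal, degree_nodal]
  have hinterp := eq_interpolate_of_eval_eq (fun j => p.eval (d j)) hd.injOn hlt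
    (fun i hi => by simp [eval_nodal_at_node hi])
  conv_rhs => rw [← sub_add_cancel p (nodal univ d), hinterp, interpolate_apply]
  rw [closedLoopPoly, sub_eq_add_neg, ← sum_neg_distrib, add_comm]
  congr 1
  refine sum_congr rfl fun j _ => ?_
  rw [basis_eq_prod_sub_inv_mul_nodal_div (mem_univ j), ← nodal_erase_eq_nodal_div (mem_univ j)]
  simp only [map_neg, map_mul]
  ring

theorem exists_closedLoopPoly_eq {d : ι → 𝕜} (hd : Function.Injective d) {u : Matrix ι (Fin 1) 𝕜}
    (hu : ∀ j, u j 0 ≠ 0) {p : 𝕜[X]} (hp : p.IsMonicOfDegree (Fintype.card ι)) :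
    ∃ k : Matrix (Fin 1) ι 𝕜, closedLoopPoly d (fun j => u j 0 * k 0 j) = p := by
  refine ⟨of fun _ j => -(p.eval (d j) * nodalWeight univ d j) / u j 0, ?_⟩
  simp only [of_apply, mul_div_cancel₀ _ (hu _)]
  exact closedLoopPoly_neg_eval_mul_nodalWeight hd hp

theorem stmt18_general (n : ℕ) (lam : Fin n → ℝ) (hlam : ∀ j, 0 ≤ lam j)
    (b : Matrix (Fin n) (Fin 1) ℝ) :
    (∃ K : Matrix (Fin 1) (Fin n) ℝ, IsHurwitz (Matrix.diagonal lam + b * K)) ↔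
      ((∀ j, b j 0 ≠ 0) ∧ ∀ i j, i ≠ j → lam i ≠ lam j) := by
  have hcomplex (K : Matrix (Fin 1) (Fin n) ℝ) : (diagonal lam + b * K).map (fun x => (x : ℂ)) =
      diagonal (Complex.ofReal ∘ lam) + b.map Complex.ofReal * K.map Complex.ofReal :=
    map_diagonal_add_mul Complex.ofRealHom lam b K
  constructor
  · rintro ⟨K, hK⟩
    have hnot (j : Fin n) : (lam j : ℂ) ∉
        spectrum ℂ (diagonal (Complex.ofReal ∘ lam) + b.map Complex.ofReal * K.map Complex.ofReal) :=
      fun h => (hlam j).not_gt (Complex.ofReal_re (lam j) ▸ hK _ (hcomplex K ▸ h))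
    exact ⟨fun j hj => hnot j (mem_spectrum_diagonal_add_mul_of_eq_zero _ _ _ (by simp [hj])),
      fun i j hij h => hnot i (mem_spectrum_diagonal_add_mul_of_eq _ _ _ hij (by simp [h]))⟩
  · rintro ⟨hb, hlam_ne⟩
    have hinj : Function.Injective lam := fun i j h => by_contra fun hij => hlam_ne i j hij h
    obtain ⟨K, hK⟩ := exists_closedLoopPoly_eq hinj hb
      (by simpa using (isMonicOfDegree_X_add_one (1 : ℝ)).pow n)
    refine ⟨K, fun μ hμ => ?_⟩
    rw [hcomplex] at hμ
    have hroot := eval_closedLoopPoly_eq_zero_of_mem_spectrum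
      (Complex.ofReal_injective.comp hinj) _ _ hμ
    have hpow : (((X + 1 : ℝ[X]) ^ n).map Complex.ofRealHom).eval μ = 0 := by
      rw [← hK, closedLoopPoly_map]
      simpa [Function.comp_def] using hroot
    simp only [Polynomial.map_pow, Polynomial.map_add, map_X, Polynomial.map_one, eval_pow,
      eval_add, eval_X, eval_one] at hpow
    rw [eq_neg_of_add_eq_zero_left (pow_eq_zero_iff'.mp hpow).1]
    norm_num

theorem stmt18 (n : ℕ) (hn : 0 < n) (lam : Fin n → ℝ) (hlam : ∀ j, 0 ≤ lam j)
    (b : Matrix (Fin n) (Fin 1) ℝ) :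
    (∃ K : Matrix (Fin 1) (Fin n) ℝ, IsHurwitz (Matrix.diagonal lam + b * K)) ↔
      ((∀ j, b j 0 ≠ 0) ∧ ∀ i j, i ≠ j → lam i ≠ lam j) :=
  stmt18_general n lam hlam b
end
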